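/- arXiv:2110.05901 — 6 statements merged into one kernel-verified Lean document; each statement's English description precedes it below -/
import Mathlib

section
/- A matching M in a vertex-weighted bipartite graph is popular if and only if vote^M(M̃') ≤ 0 for every perfect matching M̃' of the augmented graph G̃ obtained from G by adding a loop at each vertex, where vote^M(e) for an edge e = {u,v} is vote^M_u(v) + vote^M_v(u) with vote^M_u(v) = 0 if {u,v} ∈ M, w(u) if u is unmatched in M or prefers v to M(u), and −w(u) otherwise; and for a loop {v,v}, vote^M({v,v}) = −w(v) if v is matched in M and 0 otherwise. -/
structure PMInstance (V : Type) [Fintype V] [DecidableEq V] where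
  A : Finset V
  E : V → V → Prop
  Esymm : ∀ u v : V, E u v → E v u
  loopless : ∀ v : V, ¬ E v v
  bipartite : ∀ u v : V, E u v → (u ∈ A ↔ v ∉ A)
  pref : V → V → V → Prop
  pref_irrefl : ∀ v u : V, ¬ pref v u u
  pref_trans : ∀ v u z t : V, pref v u z → pref v z t → pref v u t
  pref_asymm : ∀ v u z : V, pref v u z → ¬ pref v z u
  pref_total : ∀ v u z : V, E v u → E v z → u ≠ z → pref v u z ∨ pref v z u
  w : V → ℚ
  w_nonneg : ∀ v : V, 0 ≤ w v

structure Matching (V : Type) [Fintype V] [DecidableEq V] (E : V → V → Prop) where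
  m : V → Option V
  msymm : ∀ u v : V, m u = some v ↔ m v = some u
  valid : ∀ u v : V, m u = some v → E u v

attribute [local instance] Classical.propDecidable

variable {V : Type} [Fintype V] [DecidableEq V]

/-- Vertex `v` prefers matching `M` to matching `M'`. -/
def prefersVx (I : PMInstance V) (M M' : Matching V I.E) (v : V) : Prop :=
  (M'.m v = none ∧ M.m v ≠ none) ∨
    (∃ u u' : V, M.m v = some u ∧ M'.m v = some u' ∧ I.pref v u u')

/-- Total weight of the vertices preferring `M` to `M'`. -/
noncomputable def weightPref (I : PMInstance V) (M M' : Matching V I.E) : ℚ :=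
  ∑ v : V, if prefersVx I M M' v then I.w v else 0

/-- A matching is popular if it never loses a weighted head-to-head comparison. -/
def popular (I : PMInstance V) (M : Matching V I.E) : Prop :=
  ∀ M' : Matching V I.E, weightPref I M' M ≤ weightPref I M M'

/-- The vote of `u` for `v` against its partner in `M`. -/
noncomputable def vote (I : PMInstance V) (M : Matching V I.E) (u v : V) : ℚ :=
  if M.m u = some v then 0
  else if M.m u = none ∨ (∃ z : V, M.m u = some z ∧ I.pref u v z) then I.w u
  else - I.w u

/-- Total vote of a perfect matching `N` of the loop-augmented graph against `M`;
`N` is given as an involution, loops being fixed points. -/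
noncomputable def tildeVote (I : PMInstance V) (M : Matching V I.E) (N : V → V) : ℚ :=
  ∑ v : V, if N v = v then (if M.m v = none then 0 else - I.w v) else vote I M v (N v)


lemma key_pointwise (I : PMInstance V) (M M' : Matching V I.E) (v : V) :
    (if (M'.m v).getD v = v then (if M.m v = none then 0 else - I.w v)
     else vote I M v ((M'.m v).getD v))
    = (if prefersVx I M' M v then I.w v else 0)
      - (if prefersVx I M M' v then I.w v else 0) := by
  cases h' : M'.m v with
  | none =>
    have hp1 : ¬ prefersVx I M' M v := by
      rintro (⟨_, hne⟩ | ⟨a, b, ha, _, _⟩)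
      · exact hne h'
      · simp [h'] at ha
    have hp2 : prefersVx I M M' v ↔ M.m v ≠ none := by
      constructor
      · rintro (⟨_, hne⟩ | ⟨a, b, _, hb, _⟩)
        · exact hne
        · simp [h'] at hb
      · intro hne; exact Or.inl ⟨h', hne⟩
    simp only [Option.getD_none, if_pos rfl, if_neg hp1]
    by_cases hm : M.m v = none
    · simp [hm, hp2]
    · simp [hm, hp2.mpr hm]
  | some u =>
    have hvu : u ≠ v := by
      intro e; exact I.loopless v (e ▸ M'.valid v u h')
    simp only [Option.getD_some, if_neg hvu]
    unfold vote
    by_cases heq : M.m v = some u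
    · have hp1 : ¬ prefersVx I M' M v := by
        rintro (⟨hn, _⟩ | ⟨a, b, ha, hb, hp⟩)
        · simp [heq] at hn
        · rw [h'] at ha; rw [heq] at hb
          cases ha; cases hb; exact I.pref_irrefl v u hp
      have hp2 : ¬ prefersVx I M M' v := by
        rintro (⟨hn, _⟩ | ⟨a, b, ha, hb, hp⟩)
        · simp [h'] at hn
        · rw [heq] at ha; rw [h'] at hb
          cases ha; cases hb; exact I.pref_irrefl v u hp
      simp [heq, hp1, hp2]
    · by_cases hc : M.m v = none ∨ (∃ z : V, M.m v = some z ∧ I.pref v u z)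
      · have hp1 : prefersVx I M' M v := by
          rcases hc with hn | ⟨z, hz, hp⟩
          · exact Or.inl ⟨hn, by simp [h']⟩
          · exact Or.inr ⟨u, z, h', hz, hp⟩
        have hp2 : ¬ prefersVx I M M' v := by
          rintro (⟨hn, _⟩ | ⟨a, b, ha, hb, hp⟩)
          · simp [h'] at hn
          · rw [h'] at hb; cases hb
            rcases hc with hn | ⟨z, hz, hq⟩
            · rw [hn] at ha; cases ha
            · rw [hz] at ha
              obtain rfl : z = a := Option.some.inj ha
              exact I.pref_asymm v u z hq hp
        simp [heq, hc, hp1, hp2]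
      · push_neg at hc
        obtain ⟨hne, hnp⟩ := hc
        obtain ⟨z, hz⟩ : ∃ z, M.m v = some z := by
          cases hm : M.m v with
          | none => exact absurd hm hne
          | some z => exact ⟨z, rfl⟩
        have hzu : z ≠ u := by intro e; exact heq (e ▸ hz)
        have hEvu : I.E v u := M'.valid v u h'
        have hEvz : I.E v z := M.valid v z hz
        have hzup : I.pref v z u := by
          rcases I.pref_total v z u hEvz hEvu hzu with h | h
          · exact h
          · exact absurd (hnp z hz) (by simp [h])
        have hp1 : ¬ prefersVx I M' M v := by
          rintro (⟨_, _⟩ | ⟨a, b, ha, hb, hp⟩)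
          · simp_all
          · rw [h'] at ha; cases ha; rw [hz] at hb; cases hb
            exact hnp z hz hp
        have hp2 : prefersVx I M M' v := Or.inr ⟨z, u, hz, h', hzup⟩
        have hc' : ¬ (M.m v = none ∨ ∃ z : V, M.m v = some z ∧ I.pref v u z) := by
          rintro (h | ⟨a, ha, hp⟩)
          · exact hne h
          · rw [hz] at ha; cases ha; exact hnp z hz hp
        simp [heq, hc', hp1, hp2]

lemma key (I : PMInstance V) (M M' : Matching V I.E) :
    tildeVote I M (fun v => (M'.m v).getD v)
      = weightPref I M' M - weightPref I M M' := by
  unfold tildeVote weightPref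
  rw [← Finset.sum_sub_distrib]
  exact Finset.sum_congr rfl fun v _ => key_pointwise I M M' v

/-- `M` is popular iff every perfect matching of the loop-augmented graph
has nonpositive total vote against `M`. -/
theorem popular_iff_tildeVote_nonpos (I : PMInstance V) (M : Matching V I.E) :
    popular I M ↔
      ∀ N : V → V, (∀ v, N (N v) = v) → (∀ v, N v ≠ v → I.E v (N v)) →
        tildeVote I M N ≤ 0 := by
  constructor
  · intro hpop N hinv hedge
    have hsymm : ∀ u v : V,
        (if N u = u then none else some (N u)) = some v ↔
        (if N v = v then none else some (N v)) = some u := by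
      have aux : ∀ u v : V,
          (if N u = u then none else some (N u)) = some v →
          (if N v = v then none else some (N v)) = some u := by
        intro u v h
        by_cases hu : N u = u
        · simp [hu] at h
        · simp [hu] at h
          have hNv : N v = u := by rw [← h, hinv]
          have hvv : N v ≠ v := by
            intro e; rw [hNv] at e; exact hu (h.trans e.symm)
          have huv : ¬ u = v := fun e => hu (h.trans e.symm)
          simp [hvv, hNv, huv]
      exact fun u v => ⟨aux u v, aux v u⟩
    let M' : Matching V I.E :=
      { m := fun v => if N v = v then none else some (N v)
        msymm := hsymm
        valid := by
          intro u v h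
          by_cases hu : N u = u
          · simp [hu] at h
          · simp [hu] at h
            exact h ▸ hedge u hu }
    have hfun : (fun v => (M'.m v).getD v) = N := by
      funext v
      by_cases hv : N v = v
      · simp [M', hv]
      · simp [M', hv]
    have := key I M M'
    rw [hfun] at this
    rw [this]
    have := hpop M'
    linarith
  · intro h M'
    set N : V → V := fun v => (M'.m v).getD v with hN
    have hinv : ∀ v, N (N v) = v := by
      intro v
      cases h' : M'.m v with
      | none => simp [hN, h']
      | some u =>
        have : M'.m u = some v := (M'.msymm v u).mp h'
        simp [hN, h', this]
    have hedge : ∀ v, N v ≠ v → I.E v (N v) := by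
      intro v hv
      cases h' : M'.m v with
      | none => simp [hN, h'] at hv
      | some u =>
        have : N v = u := by simp [hN, h']
        rw [this]; exact M'.valid v u h'
    have hk := key I M M'
    have := h N hinv hedge
    rw [hk] at this
    linarith
end

section
/- A matching M in a vertex-weighted bipartite graph G = (A ∪ B, E) is popular if and only if there exists a vector y ∈ Q^V with sum of entries equal to 0, such that y_a + y_b ≥ vote^M({a,b}) for every edge {a,b} ∈ E, y_v ≥ 0 for every vertex v unmatched by M, and y_v ≥ −w(v) for every vertex v. -/
attribute [local instance] Classical.propDecidable

variable {V : Type} [Fintype V] [DecidableEq V]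

/-- A witness of popularity of `M`. -/
def IsWitness (I : PMInstance V) (M : Matching V I.E) (y : V → ℚ) : Prop :=
  (∑ v : V, y v) = 0 ∧
  (∀ u v : V, I.E u v → vote I M u v + vote I M v u ≤ y u + y v) ∧
  (∀ v : V, M.m v = none → 0 ≤ y v) ∧
  (∀ v : V, - I.w v ≤ y v)

open Finset

lemma exists_pos_nat_mul_eq_natCast {ι : Type*} [Fintype ι] (f : ι → ℚ) (hf : ∀ i, 0 ≤ f i) :
    ∃ n : ℕ, 0 < n ∧ ∃ g : ι → ℕ, ∀ i, (g i : ℚ) = n * f i := by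
  refine ⟨∏ i, (f i).den, prod_pos fun i _ => (f i).den_pos, ?_⟩
  have h : ∀ i, ∃ k : ℕ, (k : ℚ) = (∏ j, (f j).den : ℕ) * f i := by
    intro i
    obtain ⟨m, hm⟩ := dvd_prod_of_mem (fun j => (f j).den) (mem_univ i)
    have hnum : ((f i).num.toNat : ℚ) = (f i).num := by
      exact_mod_cast Int.toNat_of_nonneg (Rat.num_nonneg.mpr (hf i))
    refine ⟨m * (f i).num.toNat, ?_⟩
    rw [hm]
    push_cast
    rw [hnum, ← Rat.den_mul_eq_num]
    ring
  choose g hg using h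
  exact ⟨g, hg⟩

namespace Matching

variable {E : V → V → Prop}

def empty : Matching V E where
  m _ := none
  msymm := by simp
  valid := by simp

instance : Nonempty (Matching V E) := ⟨empty⟩

instance : Finite (Matching V E) :=
  Finite.of_injective Matching.m fun M N h => by cases M; cases N; simpa using h

def partner (M : Matching V E) (v : V) : V := (M.m v).getD v

lemma partner_involutive (M : Matching V E) : Function.Involutive M.partner := by
  intro v
  cases h : M.m v with
  | none => simp [partner, h]
  | some u => simp [partner, h, (M.msymm v u).mp h]

lemma ne_of_m_eq_some {A : Finset V} (hA : ∀ u v, E u v → (u ∈ A ↔ v ∉ A))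
    (M : Matching V E) {u v : V} (h : M.m u = some v) : u ≠ v := by
  rintro rfl
  have := hA u u (M.valid u u h)
  tauto

section Weight

variable {β : Type} [AddCommMonoid β]

/-- Every edge `{u, v}` of `M` contributes `c u v + c v u`. -/
def weight (c : V → V → β) (M : Matching V E) : β :=
  ∑ v, (M.m v).elim 0 (c v)

lemma weight_swap (c : V → V → β) (M : Matching V E) :
    M.weight (fun u v => c v u) = M.weight c := by
  refine Fintype.sum_equiv (M.partner_involutive.toPerm _) _ _ fun v => ?_
  cases h : M.m v with
  | none => simp [partner, h]
  | some u => simp [partner, h, (M.msymm v u).mp h]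

lemma weight_add (c d : V → V → β) (M : Matching V E) :
    M.weight (fun u v => c u v + d u v) = M.weight c + M.weight d := by
  rw [weight, weight, weight, ← sum_add_distrib]
  refine sum_congr rfl fun v _ => ?_
  cases M.m v <;> simp

lemma map_weight {γ : Type} [AddCommMonoid γ] (φ : β →+ γ) (c : V → V → β)
    (M : Matching V E) : φ (M.weight c) = M.weight fun u v => φ (c u v) := by
  rw [weight, weight, map_sum]
  refine sum_congr rfl fun v _ => ?_
  cases M.m v <;> simp

variable [PartialOrder β] [IsOrderedAddMonoid β]

lemma weight_le_weight {c d : V → V → β} (M : Matching V E)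
    (h : ∀ u v, M.m u = some v → c u v ≤ d u v) :
    M.weight c ≤ M.weight d :=
  sum_le_sum fun v _ => by
    cases hv : M.m v
    · simp
    · exact h v _ hv

lemma weight_le_sum {f : V → β} (hf : ∀ v, 0 ≤ f v) (M : Matching V E) :
    M.weight (fun u _ => f u) ≤ ∑ v, f v :=
  sum_le_sum fun v _ => by cases M.m v <;> simp [hf v]

end Weight

lemma even_weight {A : Finset V} (hA : ∀ u v, E u v → (u ∈ A ↔ v ∉ A))
    {c : V → V → ℕ} (hc : ∀ u v, c u v = c v u) (M : Matching V E) : Even (M.weight c) := by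
  rw [← ZMod.natCast_eq_zero_iff_even, weight, Nat.cast_sum]
  refine sum_ninvolution M.partner (fun v => ?_) (fun v hv => ?_) (fun v => mem_univ _)
    M.partner_involutive
  · cases h : M.m v with
    | none => simp [partner, h]
    | some u => simp [partner, h, (M.msymm v u).mp h, hc u v, CharTwo.add_self_eq_zero]
  · cases h : M.m v with
    | none => simp [h] at hv
    | some u => simpa [partner, h] using (M.ne_of_m_eq_some hA h).symm

section Operations

variable {β : Type} [AddCommMonoid β]

noncomputable def restrict (M : Matching V E) (p : V → V → Prop) (hp : ∀ u v, p u v → p v u) :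
    Matching V E where
  m v := (M.m v).filter fun u => p v u
  msymm u v := by
    simp only [Option.filter_eq_some_iff, decide_eq_true_eq, M.msymm u v]
    exact and_congr_right fun _ => ⟨hp u v, hp v u⟩
  valid u v h := M.valid u v (Option.filter_eq_some_iff.mp h).1

lemma restrict_m_eq_some {M : Matching V E} {p : V → V → Prop} {hp : ∀ u v, p u v → p v u}
    {u v : V} : (M.restrict p hp).m u = some v ↔ M.m u = some v ∧ p u v := by
  simp [restrict]

lemma weight_restrict {M : Matching V E} {p : V → V → Prop} {hp : ∀ u v, p u v → p v u}
    {c : V → V → β} (hc : ∀ u v, M.m u = some v → ¬ p u v → c u v = 0) :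
    (M.restrict p hp).weight c = M.weight c := by
  refine sum_congr rfl fun v _ => ?_
  cases h : M.m v with
  | none => simp [restrict, h]
  | some u => by_cases hpu : p v u <;> simp [restrict, h, hpu, hc v u h, Option.filter_some]

noncomputable def piecewise (M N : Matching V E) (S : Set V)
    (hM : ∀ u v, M.m u = some v → (u ∈ S ↔ v ∈ S))
    (hN : ∀ u v, N.m u = some v → (u ∈ S ↔ v ∈ S)) : Matching V E where
  m v := if v ∈ S then M.m v else N.m v
  msymm u v := by
    by_cases hu : u ∈ S <;> by_cases hv : v ∈ S <;> simp only [hu, hv, if_true, if_false]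
    · exact M.msymm u v
    · exact iff_of_false (fun h => hv ((hM u v h).mp hu)) fun h => hv ((hN v u h).mpr hu)
    · exact iff_of_false (fun h => hu ((hN u v h).mpr hv)) fun h => hu ((hM v u h).mp hv)
    · exact N.msymm u v
  valid u v h := by
    by_cases hu : u ∈ S
    · exact M.valid u v (by simpa [hu] using h)
    · exact N.valid u v (by simpa [hu] using h)

lemma weight_piecewise_add_weight_piecewise (M N : Matching V E) (S : Set V)
    (hM : ∀ u v, M.m u = some v → (u ∈ S ↔ v ∈ S))
    (hN : ∀ u v, N.m u = some v → (u ∈ S ↔ v ∈ S)) (c : V → V → β) :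
    (piecewise M N S hM hN).weight c + (piecewise N M S hN hM).weight c =
      M.weight c + N.weight c := by
  simp only [weight, ← sum_add_distrib]
  refine sum_congr rfl fun v _ => ?_
  by_cases hv : v ∈ S <;> simp [piecewise, hv, add_comm]

noncomputable def addEdge (M : Matching V E) {a b : V} (hab : E a b) (hba : E b a)
    (ha : M.m a = none) (hb : M.m b = none) : Matching V E where
  m v := if v = a then some b else if v = b then some a else M.m v
  msymm u v := by
    have hfree : ∀ x, M.m x ≠ some a ∧ M.m x ≠ some b := fun x =>
      ⟨fun h => by simp [(M.msymm x a).mp h] at ha, fun h => by simp [(M.msymm x b).mp h] at hb⟩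
    have := hfree u
    have := hfree v
    by_cases hua : u = a <;> by_cases hub : u = b <;> by_cases hva : v = a <;>
      by_cases hvb : v = b <;> simp_all [M.msymm u v, eq_comm]
  valid u v h := by
    by_cases hua : u = a
    · subst hua; simp_all
    by_cases hub : u = b
    · subst hub; simp_all
    exact M.valid u v (by simpa [hua, hub] using h)

lemma weight_addEdge (M : Matching V E) {a b : V} (hab : E a b) (hba : E b a) (hne : a ≠ b)
    (ha : M.m a = none) (hb : M.m b = none) (c : V → V → β) :
    (M.addEdge hab hba ha hb).weight c = M.weight c + (c a b + c b a) := by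
  have hterm : ∀ v, ((M.addEdge hab hba ha hb).m v).elim 0 (c v) =
      (M.m v).elim 0 (c v) + ((if v = a then c a b else 0) + if v = b then c b a else 0) := by
    intro v
    by_cases hva : v = a
    · subst hva; simp [addEdge, ha, hne]
    by_cases hvb : v = b
    · subst hvb; simp [addEdge, hb, Ne.symm hne]
    simp [addEdge, hva, hvb]
  simp only [weight, hterm, sum_add_distrib, sum_ite_eq', mem_univ, if_true]

end Operations

def IsMaxWeight {β : Type} [AddCommMonoid β] [LE β] (c : V → V → β) (M : Matching V E) :
    Prop :=
  ∀ N : Matching V E, N.weight c ≤ M.weight c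

lemma exists_isMaxWeight {β : Type} [AddCommMonoid β] [LinearOrder β] (c : V → V → β) :
    ∃ M : Matching V E, IsMaxWeight c M :=
  Finite.exists_max _

lemma exists_isMaxWeight_m_eq_none {c : V → V → ℕ} (hc : ∀ u v, c u v = c v u)
    {M : Matching V E} (hM : IsMaxWeight c M) {t : V} (ht : ∀ u, M.m t = some u → c t u = 0) :
    ∃ N : Matching V E, IsMaxWeight c N ∧ N.m t = none := by
  refine ⟨M.restrict (fun u v => 0 < c u v) fun u v h => hc u v ▸ h, ?_, ?_⟩
  · rw [IsMaxWeight, weight_restrict fun u v _ h => Nat.eq_zero_of_not_pos h]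
    exact hM
  · refine Option.eq_none_iff_forall_ne_some.mpr fun u h => ?_
    obtain ⟨htu, hpos⟩ := restrict_m_eq_some.mp h
    exact hpos.ne' (ht u htu)

section AlternatingWalk

variable (Ma Mb : Matching V E) (b : V)

noncomputable def altMatching (n : ℕ) : Matching V E := if Even n then Ma else Mb

noncomputable def altWalk : ℕ → Option V
  | 0 => some b
  | n + 1 => (altWalk n).bind (altMatching Ma Mb n).m

variable {Ma Mb b}

lemma altWalk_succ_eq_some {n : ℕ} {u v : V} (hv : altWalk Ma Mb b n = some v)
    (hu : (altMatching Ma Mb n).m v = some u) : altWalk Ma Mb b (n + 1) = some u := by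
  simp [altWalk, hv, hu]

lemma altWalk_eq_some_of_succ {n : ℕ} {u v : V} (hv : altWalk Ma Mb b (n + 1) = some v)
    (hu : (altMatching Ma Mb n).m v = some u) : altWalk Ma Mb b n = some u := by
  obtain ⟨w, hw, hwv⟩ := Option.bind_eq_some_iff.mp hv
  rw [((altMatching Ma Mb n).msymm w v).mp hwv] at hu
  rwa [← Option.some.inj hu]

lemma altWalk_mem_iff {A : Finset V} (hA : ∀ u v, E u v → (u ∈ A ↔ v ∉ A)) :
    ∀ {n : ℕ} {v : V}, altWalk Ma Mb b n = some v → (v ∈ A ↔ (b ∈ A ↔ Even n))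
  | 0, v, h => by simp [altWalk] at h; simp [h]
  | n + 1, v, h => by
    obtain ⟨u, hu, huv⟩ := Option.bind_eq_some_iff.mp h
    have := hA u v ((altMatching Ma Mb n).valid u v huv)
    have := altWalk_mem_iff hA hu
    rw [Nat.even_add_one]
    tauto

/-- As `Mb` leaves `b` unmatched, the walk runs through the whole path of `Ma ∪ Mb` from `b`. -/
lemma exists_altWalk_eq_some_of_m_eq_some (hb : Mb.m b = none) {n : ℕ} {u v : V}
    (hv : altWalk Ma Mb b n = some v) (huv : Ma.m v = some u ∨ Mb.m v = some u) :
    ∃ k, altWalk Ma Mb b k = some u := by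
  rcases n with _ | k
  · obtain rfl : b = v := by simpa [altWalk] using hv
    rcases huv with huv | huv
    · exact ⟨1, altWalk_succ_eq_some hv (by simpa [altMatching] using huv)⟩
    · simp [hb] at huv
  · by_cases hk : Even k
    · have hk' : ¬ Even (k + 1) := by simpa [Nat.even_add_one] using hk
      rcases huv with huv | huv
      · exact ⟨k, altWalk_eq_some_of_succ hv (by simpa [altMatching, hk] using huv)⟩
      · exact ⟨k + 2, altWalk_succ_eq_some hv (by simpa [altMatching, hk'] using huv)⟩
    · have hk' : Even (k + 1) := by simpa [Nat.even_add_one] using hk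
      rcases huv with huv | huv
      · exact ⟨k + 2, altWalk_succ_eq_some hv (by simpa [altMatching, hk'] using huv)⟩
      · exact ⟨k, altWalk_eq_some_of_succ hv (by simpa [altMatching, hk] using huv)⟩

lemma altWalk_ne_some {A : Finset V} (hA : ∀ u v, E u v → (u ∈ A ↔ v ∉ A)) {a : V}
    (hab : E a b) (ha : Ma.m a = none) (n : ℕ) : altWalk Ma Mb b n ≠ some a := by
  intro h
  have hside := altWalk_mem_iff hA h
  have hodd : ¬ Even n := by have := hA a b hab; tauto
  obtain ⟨k, rfl⟩ : ∃ k, n = k + 1 := Nat.exists_eq_add_one.mpr (Nat.pos_of_ne_zero (by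
    rintro rfl; simp at hodd))
  obtain ⟨w, -, hwa⟩ := Option.bind_eq_some_iff.mp h
  have hk : Even k := by simpa [Nat.even_add_one] using hodd
  simp only [altMatching, hk, if_true] at hwa
  simp [(Ma.msymm w a).mp hwa] at ha

end AlternatingWalk

section Cover

variable {A : Finset V} (hA : ∀ u v, E u v → (u ∈ A ↔ v ∉ A))
include hA

/-- Exchanging `Ma` and `Mb` along the alternating path from `b` yields two matchings of total
weight `Ma.weight c + Mb.weight c`, hence both of maximum weight; one of them leaves `a` and `b`
free, so the edge `ab` could be added to it. -/
lemma IsMaxWeight.m_ne_none {β : Type} [AddCommMonoid β] [LinearOrder β]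
    [IsOrderedCancelAddMonoid β] {c : V → V → β} {a b : V} (hab : E a b) (hba : E b a)
    (hc : 0 < c a b + c b a) {Ma Mb : Matching V E} (hMa : IsMaxWeight c Ma)
    (hMb : IsMaxWeight c Mb) (ha : Ma.m a = none) : Mb.m b ≠ none := by
  intro hb
  set S : Set V := {v | ∃ n, altWalk Ma Mb b n = some v}
  have hS : ∀ u v, (Ma.m u = some v ∨ Mb.m u = some v) → (u ∈ S ↔ v ∈ S) := fun u v huv =>
    ⟨fun ⟨_, hn⟩ => exists_altWalk_eq_some_of_m_eq_some hb hn huv,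
      fun ⟨_, hn⟩ => exists_altWalk_eq_some_of_m_eq_some hb hn
        (huv.imp (Ma.msymm u v).mp (Mb.msymm u v).mp)⟩
  have hMaS : ∀ u v, Ma.m u = some v → (u ∈ S ↔ v ∈ S) := fun u v h => hS u v (.inl h)
  have hMbS : ∀ u v, Mb.m u = some v → (u ∈ S ↔ v ∈ S) := fun u v h => hS u v (.inr h)
  have hbS : b ∈ S := ⟨0, rfl⟩
  have haS : a ∉ S := fun ⟨n, hn⟩ => altWalk_ne_some hA hab ha n hn
  set M := piecewise Mb Ma S hMbS hMaS
  have hM : Ma.weight c ≤ M.weight c := by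
    refine le_of_add_le_add_right (a := (piecewise Ma Mb S hMaS hMbS).weight c) ?_
    rw [weight_piecewise_add_weight_piecewise, add_comm]
    gcongr
    exact hMb _
  have hMa' : M.m a = none := by simpa [M, piecewise, haS] using ha
  have hMb' : M.m b = none := by simpa [M, piecewise, hbS] using hb
  have hne : a ≠ b := by rintro rfl; have := hA a a hab; tauto
  have := hMa (M.addEdge hab hba hMa' hMb')
  rw [weight_addEdge (hne := hne)] at this
  exact (lt_add_of_pos_right _ hc).not_ge (this.trans hM)

lemma exists_forall_isMaxWeight_pos {c : V → V → ℕ} (hc : ∀ u v, c u v = c v u) {a b : V}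
    (hab : E a b) (hba : E b a) (hcab : 0 < c a b) :
    ∃ t, (t = a ∨ t = b) ∧
      ∀ M : Matching V E, IsMaxWeight c M → ∃ u, M.m t = some u ∧ 0 < c t u := by
  by_contra! h
  obtain ⟨Ma, hMa, ha⟩ := h a (.inl rfl)
  obtain ⟨Mb, hMb, hb⟩ := h b (.inr rfl)
  obtain ⟨Na, hNa, ha⟩ :=
    exists_isMaxWeight_m_eq_none hc hMa fun u h => Nat.le_zero.mp (ha u h)
  obtain ⟨Nb, hNb, hb⟩ :=
    exists_isMaxWeight_m_eq_none hc hMb fun u h => Nat.le_zero.mp (hb u h)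
  exact hNa.m_ne_none hA hab hba (by omega) hNb ha hb

end Cover

section Egervary

def lowerAt (c : V → V → ℕ) (t : V) (u v : V) : ℕ :=
  c u v - (if u = t then 1 else 0) - (if v = t then 1 else 0)

omit [Fintype V] in
lemma lowerAt_le (c : V → V → ℕ) (t u v : V) : lowerAt c t u v ≤ c u v :=
  (Nat.sub_le _ _).trans (Nat.sub_le _ _)

variable {A : Finset V} (hA : ∀ u v, E u v → (u ∈ A ↔ v ∉ A))
include hA

lemma weight_lowerAt_add_two_le {c : V → V → ℕ} (hc : ∀ u v, c u v = c v u) {M : Matching V E}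
    {t u : V} (htu : M.m t = some u) (hpos : 0 < c t u) :
    M.weight (lowerAt c t) + 2 ≤ M.weight c := by
  have hne : t ≠ u := M.ne_of_m_eq_some hA htu
  have hut : M.m u = some t := (M.msymm t u).mp htu
  have hterm : ∀ v, (M.m v).elim 0 (lowerAt c t v) +
      ((if v = t then 1 else 0) + if v = u then 1 else 0) ≤ (M.m v).elim 0 (c v) := by
    intro v
    by_cases hvt : v = t
    · subst hvt; simp [lowerAt, htu, hne]; omega
    by_cases hvu : v = u
    · subst hvu; simp [lowerAt, hut, hvt, hc v t]; omega
    cases M.m v <;> simp [lowerAt, hvt, hvu]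
  calc M.weight (lowerAt c t) + 2
      = ∑ v, ((M.m v).elim 0 (lowerAt c t v) +
          ((if v = t then 1 else 0) + if v = u then 1 else 0)) := by
        simp [weight, sum_add_distrib]
    _ ≤ M.weight c := sum_le_sum fun v _ => hterm v

lemma weight_lowerAt_add_two_le_of_isMaxWeight {c : V → V → ℕ} (hc : ∀ u v, c u v = c v u)
    {t : V} (ht : ∀ M : Matching V E, IsMaxWeight c M → ∃ u, M.m t = some u ∧ 0 < c t u)
    {Mc : Matching V E} (hMc : IsMaxWeight c Mc) (M : Matching V E) :
    M.weight (lowerAt c t) + 2 ≤ Mc.weight c := by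
  by_cases hM : IsMaxWeight c M
  · obtain ⟨u, htu, hpos⟩ := ht M hM
    exact (weight_lowerAt_add_two_le hA hc htu hpos).trans (hMc M)
  have hlt : M.weight c < Mc.weight c :=
    not_le.mp fun h => hM fun N => (hMc N).trans h
  obtain ⟨k, hk⟩ := even_weight hA hc M
  obtain ⟨l, hl⟩ := even_weight hA hc Mc
  have := M.weight_le_weight fun u v _ => lowerAt_le c t u v
  omega

/-- Egerváry's theorem (the weighted König theorem) for integral weights. -/
theorem exists_cover_two_mul_sum_le_weight (hE : ∀ u v, E u v → E v u) (c : V → V → ℕ)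
    (hc : ∀ u v, c u v = c v u) :
    ∃ s : V → ℕ, (∀ u v, E u v → c u v ≤ s u + s v) ∧
      ∃ M : Matching V E, 2 * ∑ v, s v ≤ M.weight c := by
  induction hN : ∑ p : V × V, c p.1 p.2 using Nat.strong_induction_on generalizing c with
  | _ N ih =>
  by_cases h0 : ∀ u v, E u v → c u v = 0
  · exact ⟨0, fun u v huv => by simp [h0 u v huv], empty, by simp⟩
  push Not at h0
  obtain ⟨a, b, hab, hcab⟩ := h0
  obtain ⟨t, hta, ht⟩ :=
    exists_forall_isMaxWeight_pos hA hc hab (hE a b hab) (Nat.pos_of_ne_zero hcab)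
  have hlt : ∑ p : V × V, lowerAt c t p.1 p.2 < N := by
    refine hN ▸ sum_lt_sum (fun p _ => lowerAt_le c t _ _) ⟨(a, b), mem_univ _, ?_⟩
    rcases hta with rfl | rfl <;> simp [lowerAt] <;> omega
  obtain ⟨s, hs, M, hM⟩ :=
    ih _ hlt (lowerAt c t) (fun u v => by simp only [lowerAt]; rw [hc u v]; omega) rfl
  obtain ⟨Mc, hMc⟩ := exists_isMaxWeight (E := E) c
  refine ⟨fun v => s v + if v = t then 1 else 0, fun u v huv => ?_, Mc, ?_⟩
  · have := hs u v huv
    simp only [lowerAt] at this ⊢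
    omega
  · have := weight_lowerAt_add_two_le_of_isMaxWeight hA hc ht hMc M
    simp only [sum_add_distrib, sum_ite_eq', mem_univ, if_true]
    omega

theorem exists_cover_two_mul_sum_le_weight_rat (hE : ∀ u v, E u v → E v u) (c : V → V → ℚ)
    (hc0 : ∀ u v, 0 ≤ c u v) (hc : ∀ u v, c u v = c v u) :
    ∃ s : V → ℚ, (∀ v, 0 ≤ s v) ∧ (∀ u v, E u v → c u v ≤ s u + s v) ∧
      ∃ M : Matching V E, 2 * ∑ v, s v ≤ M.weight c := by
  obtain ⟨n, hn, g, hg⟩ :=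
    exists_pos_nat_mul_eq_natCast (fun p : V × V => c p.1 p.2) fun p => hc0 _ _
  have hn' : (0 : ℚ) < n := by exact_mod_cast hn
  have hgc : ∀ u v, g (u, v) = g (v, u) := fun u v => by
    have := hg (u, v); rw [hc, ← hg (v, u)] at this; exact_mod_cast this
  obtain ⟨s, hs, M, hM⟩ := exists_cover_two_mul_sum_le_weight hA hE (fun u v => g (u, v)) hgc
  refine ⟨fun v => s v / n, fun v => by positivity, fun u v huv => ?_, M, ?_⟩
  · rw [← add_div, le_div_iff₀ hn', mul_comm, ← hg (u, v)]
    exact_mod_cast hs u v huv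
  · have hw : ((M.weight fun u v => g (u, v) : ℕ) : ℚ) = n * M.weight c := by
      have hcast := map_weight (Nat.castAddMonoidHom ℚ) (fun u v => g (u, v)) M
      have hmul := map_weight (AddMonoidHom.mulLeft (n : ℚ)) c M
      simp only [Nat.coe_castAddMonoidHom, AddMonoidHom.coe_mulLeft, hg] at hcast hmul
      rw [hcast, hmul]
    rw [← sum_div, mul_div_assoc', div_le_iff₀ hn', mul_comm _ (n : ℚ), ← hw]
    exact_mod_cast hM

end Egervary

end Matching

section Popularity

variable (I : PMInstance V) (M : Matching V I.E)

/-- `vote^M_v(⊥)`: the vote of `v` for being unmatched rather than matched as in `M`. -/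
noncomputable def voteUnmatched (v : V) : ℚ :=
  if M.m v = none then 0 else -I.w v

noncomputable def voteGain (u v : V) : ℚ :=
  vote I M u v - voteUnmatched I M u

lemma voteUnmatched_eq_zero {v : V} (hv : M.m v = none) : voteUnmatched I M v = 0 := by
  simp [voteUnmatched, hv]

lemma neg_w_le_voteUnmatched (v : V) : -I.w v ≤ voteUnmatched I M v := by
  unfold voteUnmatched
  split_ifs <;> linarith [I.w_nonneg v]

lemma voteGain_nonneg (u v : V) : 0 ≤ voteGain I M u v := by
  unfold voteGain vote voteUnmatched
  split_ifs <;> simp_all <;> linarith [I.w_nonneg u]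

lemma ite_prefersVx_sub_ite_prefersVx (M' : Matching V I.E) (v : V) :
    ((if prefersVx I M' M v then I.w v else 0) - if prefersVx I M M' v then I.w v else 0) =
      (M'.m v).elim (voteUnmatched I M v) (vote I M v) := by
  unfold prefersVx voteUnmatched vote
  cases hM' : M'.m v with
  | none => cases hM : M.m v <;> simp
  | some u =>
    cases hM : M.m v with
    | none => simp
    | some z =>
      rcases eq_or_ne u z with rfl | hne
      · simp [I.pref_irrefl]
      rcases I.pref_total v u z (M'.valid v u hM') (M.valid v z hM) hne with h | h
      · simp [h, I.pref_asymm v u z h, hne.symm]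
      · simp [h, I.pref_asymm v z u h, hne.symm]

lemma weightPref_sub_weightPref (M' : Matching V I.E) :
    weightPref I M' M - weightPref I M M' =
      ∑ v, voteUnmatched I M v + M'.weight (voteGain I M) := by
  simp only [weightPref, Matching.weight, ← sum_sub_distrib, ← sum_add_distrib,
    ite_prefersVx_sub_ite_prefersVx]
  refine sum_congr rfl fun v _ => ?_
  cases M'.m v <;> simp [voteGain]

lemma popular_iff_forall_weight_voteGain_le :
    popular I M ↔
      ∀ M' : Matching V I.E, M'.weight (voteGain I M) ≤ -∑ v, voteUnmatched I M v :=
  forall_congr' fun M' => by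
    have := weightPref_sub_weightPref I M M'
    constructor <;> intro h <;> linarith

variable {I M}

lemma IsWitness.voteUnmatched_le {y : V → ℚ} (hy : IsWitness I M y) (v : V) :
    voteUnmatched I M v ≤ y v := by
  unfold voteUnmatched
  split_ifs with hv
  · exact hy.2.2.1 v hv
  · exact hy.2.2.2 v

lemma IsWitness.popular {y : V → ℚ} (hy : IsWitness I M y) : popular I M := by
  rw [popular_iff_forall_weight_voteGain_le]
  intro M'
  set g : V → ℚ := fun v => y v - voteUnmatched I M v
  have hle : M'.weight (fun u v => voteGain I M u v + voteGain I M v u) ≤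
      M'.weight (fun u v => g u + g v) :=
    M'.weight_le_weight fun u v huv => by
      have := hy.2.1 u v (M'.valid u v huv)
      simp only [voteGain, g]
      linarith
  rw [Matching.weight_add, Matching.weight_add, M'.weight_swap (voteGain I M),
    M'.weight_swap fun u _ => g u] at hle
  have hg := M'.weight_le_sum (fun v => sub_nonneg.mpr (hy.voteUnmatched_le v))
  have hsum : ∑ v, g v = -∑ v, voteUnmatched I M v := by
    simp only [g, sum_sub_distrib, hy.1, zero_sub]
  linarith

lemma exists_witness_of_popular (hM : popular I M) : ∃ y : V → ℚ, IsWitness I M y := by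
  rcases isEmpty_or_nonempty V with hV | ⟨⟨v₀⟩⟩
  · exact ⟨0, by simp [IsWitness]⟩
  obtain ⟨s, hs0, hs, M', hM'⟩ := Matching.exists_cover_two_mul_sum_le_weight_rat I.bipartite
    I.Esymm (fun u v => voteGain I M u v + voteGain I M v u)
    (fun u v => add_nonneg (voteGain_nonneg I M u v) (voteGain_nonneg I M v u))
    fun u v => add_comm _ _
  rw [Matching.weight_add, M'.weight_swap (voteGain I M)] at hM'
  set δ : ℚ := -∑ v, voteUnmatched I M v - ∑ v, s v
  have hδ : 0 ≤ δ := by linarith [(popular_iff_forall_weight_voteGain_le I M).mp hM M']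
  refine ⟨fun v => voteUnmatched I M v + s v + if v = v₀ then δ else 0, ?_, fun u v huv => ?_,
    fun v hv => ?_, fun v => ?_⟩ <;> dsimp only
  · simp only [sum_add_distrib, sum_ite_eq', mem_univ, if_true, δ]
    ring
  · have := hs u v huv
    simp only [voteGain] at this
    split_ifs <;> linarith
  · rw [voteUnmatched_eq_zero I M hv]
    split_ifs <;> linarith [hs0 v]
  · have := neg_w_le_voteUnmatched I M v
    split_ifs <;> linarith [hs0 v]

end Popularity

/-- A matching is popular iff it admits a witness. -/
theorem popular_iff_exists_witness (I : PMInstance V) (M : Matching V I.E) :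
    popular I M ↔ ∃ y : V → ℚ, IsWitness I M y :=
  ⟨exists_witness_of_popular, fun ⟨_, hy⟩ => hy.popular⟩
end

section
/- Let G = (A ∪ B, E) be a vertex-weighted bipartite instance with w(a) = c > 3 for all a ∈ A and w(b) = 1 for all b ∈ B. Then any matching M that is popular in this instance is also popular in the instance obtained by setting w(b) = 0 for all b ∈ B (keeping all other data unchanged). -/
attribute [local instance] Classical.propDecidable

variable {V : Type} [Fintype V] [DecidableEq V]

/-- The instance obtained by setting the weight of every `B`-vertex to `0`. -/
def zeroB (I : PMInstance V) : PMInstance V :=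
  { I with
    w := fun v => if v ∈ I.A then I.w v else 0
    w_nonneg := by
      intro v
      by_cases h : v ∈ I.A
      · simpa [h] using I.w_nonneg v
      · simp [h] }

/-!
Let `M` be popular for the weights `c` on `A` and `1` on `B`, and let `M'` be any matching. If
`a ∈ A` prefers its `M'`-partner `b` to its `M`-partner, then `b` is matched in `M`, say to `a'`:
otherwise forcing the edge `ab` into `M` wins `c + 1` against at most `1`. Moreover `a'` does not
prefer its `M'`-partner `b'` to `b`: otherwise forcing both `ab` and `a'b'` into `M` wins `2c`
against at most `c + 3` (only `b`, `b'`, the `M`-partner of `a` and the `M`-partner of `b'` can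
lose), and this is where `c > 3` enters. Hence `a ↦ M(M'(a))` injects the `A`-vertices preferring
`M'` into those preferring `M`, and once the `B`-weights are `0` only `A`-vertices count.
-/

namespace Matching

variable {E : V → V → Prop}

def single {a b : V} (hab : E a b) (hba : E b a) : Matching V E where
  m v := if v = a then some b else if v = b then some a else none
  msymm u v := by
    split_ifs <;> simp_all [eq_comm]
  valid u v h := by
    split_ifs at h <;> simp_all

section Single

variable {a b : V} (hab : E a b) (hba : E b a)

lemma single_apply_left : (single hab hba).m a = some b := by
  simp [single]

lemma single_apply_right (hne : a ≠ b) : (single hab hba).m b = some a := by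
  simp [single, hne.symm]

lemma single_apply_of_ne {v : V} (hva : v ≠ a) (hvb : v ≠ b) : (single hab hba).m v = none := by
  simp [single, hva, hvb]

lemma single_ne_none_iff {v : V} : (single hab hba).m v ≠ none ↔ v = a ∨ v = b := by
  simp only [single]
  split_ifs <;> simp_all

end Single

def override (M F : Matching V E) : Matching V E where
  m v := (F.m v).or (if ∀ u, M.m v = some u → F.m u = none then M.m v else none)
  msymm := by
    have key : ∀ u v, (F.m u).or (if ∀ x, M.m u = some x → F.m x = none then M.m u else none)
        = some v → (F.m v).or (if ∀ x, M.m v = some x → F.m x = none then M.m v else none)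
        = some u := by
      intro u v h
      rcases hFu : F.m u with _ | w
      · rw [hFu, Option.none_or] at h
        split_ifs at h with hfree
        have hvu := (M.msymm u v).1 h
        rw [hfree v h, Option.none_or,
          if_pos fun x hx => Option.some_inj.1 (hvu.symm.trans hx) ▸ hFu]
        exact hvu
      · rw [hFu, Option.some_or] at h
        rw [(F.msymm u v).1 (hFu.trans h), Option.some_or]
    exact fun u v => ⟨key u v, key v u⟩
  valid u v h := by
    rcases hFu : F.m u with _ | w
    · rw [hFu, Option.none_or] at h
      split_ifs at h
      exact M.valid u v h
    · rw [hFu, Option.some_or] at h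
      exact F.valid u v (h ▸ hFu)

section Override

variable {M F : Matching V E} {u v : V}

lemma override_apply_of_eq_some (h : F.m v = some u) : (M.override F).m v = some u := by
  simp [override, h]

lemma override_apply_of_eq_none (hv : F.m v = none)
    (hfree : ∀ u, M.m v = some u → F.m u = none) : (M.override F).m v = M.m v := by
  simp only [override, hv, Option.none_or, if_pos hfree]

lemma override_ne_none (h : (M.override F).m v ≠ none) : F.m v ≠ none ∨ M.m v ≠ none := by
  by_contra! hnone
  exact h (by simp [override, hnone.1, hnone.2])

lemma override_apply_ne (h : (M.override F).m v ≠ M.m v) :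
    F.m v ≠ none ∨ ∃ u, M.m v = some u ∧ F.m u ≠ none := by
  by_contra! hfix
  exact h (override_apply_of_eq_none hfix.1 hfix.2)

end Override

end Matching

lemma Finset.sum_union_le_of_nonneg {ι M : Type*} [DecidableEq ι] [AddCommMonoid M]
    [PartialOrder M] [IsOrderedAddMonoid M] {s t : Finset ι} {f : ι → M}
    (hf : ∀ i, 0 ≤ f i) : ∑ i ∈ s ∪ t, f i ≤ ∑ i ∈ s, f i + ∑ i ∈ t, f i := by
  rw [← Finset.sum_union_inter]
  exact le_add_of_nonneg_right (Finset.sum_nonneg fun i _ => hf i)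

lemma Option.sum_toFinset_le {ι M : Type*} [AddCommMonoid M] [Preorder M] {o : Option ι}
    {f : ι → M} {r : M} (hf : ∀ i ∈ o, f i ≤ r) (hr : 0 ≤ r) :
    ∑ i ∈ o.toFinset, f i ≤ r := by
  cases o <;> simp_all

section Preferences

variable (I : PMInstance V)

def PrefersToPartner (M : Matching V I.E) (v u : V) : Prop :=
  ∀ u', M.m v = some u' → I.pref v u u'

variable {I} {M N : Matching V I.E} {u v : V}

lemma prefersVx_iff_of_eq_some (h : N.m v = some u) :
    prefersVx I N M v ↔ PrefersToPartner I M v u := by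
  rcases hM : M.m v with _ | u' <;> simp [prefersVx, PrefersToPartner, h, hM]

lemma prefersVx.ne (h : prefersVx I M N v) : M.m v ≠ N.m v := by
  rintro heq
  rcases h with ⟨hN, hM⟩ | ⟨x, y, hx, hy, hxy⟩
  · exact hM (heq.trans hN)
  · rw [heq, hy] at hx
    cases hx
    exact I.pref_irrefl v x hxy

lemma prefersVx.asymm (h : prefersVx I M N v) : ¬ prefersVx I N M v := by
  rintro (⟨hM, hN⟩ | ⟨x, y, hx, hy, hxy⟩)
  · rcases h with ⟨hN', _⟩ | ⟨_, _, h', _, _⟩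
    · exact hN hN'
    · simp [hM] at h'
  · rcases h with ⟨hN', _⟩ | ⟨x', y', hx', hy', hxy'⟩
    · simp [hN'] at hx
    · rw [hx] at hy'; rw [hy] at hx'
      cases hy'; cases hx'
      exact I.pref_asymm v x y hxy hxy'

end Preferences

section Weights

variable (I : PMInstance V) {M N : Matching V I.E}

lemma weightPref_eq_sum_filter :
    weightPref I M N = ∑ v ∈ Finset.univ.filter (prefersVx I M N), I.w v :=
  (Finset.sum_filter _ _).symm

lemma weightPref_le_sum {T : Finset V} (hT : ∀ v, prefersVx I M N v → v ∈ T) :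
    weightPref I M N ≤ ∑ v ∈ T, I.w v := by
  rw [weightPref_eq_sum_filter]
  exact Finset.sum_le_sum_of_subset_of_nonneg (fun v hv => hT v (Finset.mem_filter.1 hv).2)
    fun v _ _ => I.w_nonneg v

lemma sum_le_weightPref {T : Finset V} (hT : ∀ v ∈ T, prefersVx I M N v) :
    ∑ v ∈ T, I.w v ≤ weightPref I M N := by
  rw [weightPref_eq_sum_filter]
  exact Finset.sum_le_sum_of_subset_of_nonneg (fun v hv => by simpa using hT v hv)
    fun v _ _ => I.w_nonneg v

lemma weightPref_zeroB {c : ℚ} (hA : ∀ a ∈ I.A, I.w a = c) :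
    weightPref (zeroB I) M N =
      (Finset.univ.filter fun v => prefersVx I M N v ∧ v ∈ I.A).card * c := by
  have hterm : ∀ v, (if prefersVx (zeroB I) M N v then (zeroB I).w v else 0)
      = if prefersVx I M N v ∧ v ∈ I.A then c else 0 := by
    intro v
    change (if prefersVx I M N v then (if v ∈ I.A then I.w v else 0) else 0) = _
    by_cases hv : v ∈ I.A <;> simp [hv, hA]
  unfold weightPref
  rw [Finset.sum_congr rfl fun v _ => hterm v, ← Finset.sum_filter, Finset.sum_const,
    nsmul_eq_mul]

end Weights

namespace popular

open Matching

variable {I : PMInstance V} {M : Matching V I.E}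

lemma exists_mate (hM : popular I M) (hB : ∀ b ∉ I.A, I.w b = 1) {a b : V} (ha : a ∈ I.A)
    (hwa : 0 < I.w a) (hab : I.E a b) (hpref : PrefersToPartner I M a b) :
    ∃ a', M.m b = some a' := by
  rcases hb : M.m b with _ | a'
  swap
  · exact ⟨a', rfl⟩
  exfalso
  have hne : a ≠ b := fun h => I.loopless a (h ▸ hab)
  set N := M.override (single hab (I.Esymm a b hab))
  have win_a : prefersVx I N M a :=
    (prefersVx_iff_of_eq_some (override_apply_of_eq_some (single_apply_left _ _))).2 hpref
  have win_b : prefersVx I N M b :=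
    (prefersVx_iff_of_eq_some (override_apply_of_eq_some (single_apply_right _ _ hne))).2
      fun u hu => by simp [hb] at hu
  have losers : ∀ v, prefersVx I M N v → v ∈ (M.m a).toFinset := by
    intro v hv
    rcases override_apply_ne hv.ne.symm with hF | ⟨u, hu, hF⟩
    · rcases (single_ne_none_iff _ _).1 hF with rfl | rfl
      · exact absurd win_a hv.asymm
      · exact absurd win_b hv.asymm
    · rcases (single_ne_none_iff _ _).1 hF with rfl | rfl
      · simpa using (M.msymm v u).1 hu
      · simp [(M.msymm v u).1 hu] at hb
  have lower : I.w a + I.w b ≤ weightPref I N M := by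
    simpa [Finset.sum_pair hne] using sum_le_weightPref I (T := {a, b}) (by simp [win_a, win_b])
  have upper : weightPref I M N ≤ 1 := by
    refine (weightPref_le_sum I losers).trans (Option.sum_toFinset_le (fun x hx => ?_) zero_le_one)
    exact (hB x ((I.bipartite a x (M.valid a x hx)).1 ha)).le
  have hbA : b ∉ I.A := (I.bipartite a b hab).1 ha
  linarith [hM N, hB b hbA]

lemma not_prefersToPartner_of_mate (hM : popular I M) {c : ℚ} (hc : 3 < c)
    (hA : ∀ a ∈ I.A, I.w a = c) (hB : ∀ b ∉ I.A, I.w b = 1) {a b a' b' : V} (ha : a ∈ I.A)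
    (hab : I.E a b) (hpref : PrefersToPartner I M a b) (hba' : M.m b = some a')
    (ha'b' : I.E a' b') : ¬ PrefersToPartner I M a' b' := by
  intro hpref'
  have hMa' : M.m a' = some b := (M.msymm b a').1 hba'
  have hbA : b ∉ I.A := (I.bipartite a b hab).1 ha
  have ha'A : a' ∈ I.A := (I.bipartite a' b (M.valid a' b hMa')).2 hbA
  have hb'A : b' ∉ I.A := (I.bipartite a' b' ha'b').1 ha'A
  have haa' : a ≠ a' := by rintro rfl; exact I.pref_irrefl a b (hpref b hMa')
  have hbb' : b ≠ b' := by rintro rfl; exact I.pref_irrefl a' b (hpref' b hMa')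
  have hne : ∀ x y, x ∈ I.A → y ∉ I.A → x ≠ y := fun x y hx hy h => hy (h ▸ hx)
  set F := (single ha'b' (I.Esymm a' b' ha'b')).override (single hab (I.Esymm a b hab))
  have hFa : F.m a = some b := override_apply_of_eq_some (single_apply_left _ _)
  have hFa' : F.m a' = some b' := by
    rw [override_apply_of_eq_none (single_apply_of_ne _ _ haa'.symm (hne a' b ha'A hbA)),
      single_apply_left]
    intro u hu
    rw [single_apply_left] at hu
    rw [← Option.some_inj.1 hu]
    exact single_apply_of_ne _ _ (hne a b' ha hb'A).symm hbb'.symm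
  have hF : ∀ v, F.m v ≠ none → v = a ∨ v = b ∨ v = a' ∨ v = b' := by
    intro v hv
    rcases override_ne_none hv with h | h
    · rcases (single_ne_none_iff _ _).1 h with rfl | rfl <;> simp
    · rcases (single_ne_none_iff _ _).1 h with rfl | rfl <;> simp
  set N := M.override F
  have win_a : prefersVx I N M a :=
    (prefersVx_iff_of_eq_some (override_apply_of_eq_some hFa)).2 hpref
  have win_a' : prefersVx I N M a' :=
    (prefersVx_iff_of_eq_some (override_apply_of_eq_some hFa')).2 hpref'
  have losers : ∀ v, prefersVx I M N v →
      v ∈ ({b, b'} ∪ (M.m a).toFinset) ∪ (M.m b').toFinset := by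
    intro v hv
    have hva : v ≠ a := by rintro rfl; exact hv.asymm win_a
    have hva' : v ≠ a' := by rintro rfl; exact hv.asymm win_a'
    rcases override_apply_ne hv.ne.symm with hFv | ⟨u, hu, hFu⟩
    · rcases hF v hFv with rfl | rfl | rfl | rfl <;> simp_all
    · have huv := (M.msymm v u).1 hu
      rcases hF u hFu with rfl | rfl | rfl | rfl
      · simp [huv]
      · exact absurd (Option.some_inj.1 (hba'.symm.trans huv)).symm hva'
      · simp [Option.some_inj.1 (hMa'.symm.trans huv)]
      · simp [huv]
  have lower : c + c ≤ weightPref I N M := by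
    have := sum_le_weightPref I (M := N) (N := M) (T := {a, a'}) (by simp [win_a, win_a'])
    rwa [Finset.sum_pair haa', hA a ha, hA a' ha'A] at this
  have upper : weightPref I M N ≤ (1 + 1) + 1 + c := by
    refine (weightPref_le_sum I losers).trans ?_
    refine (Finset.sum_union_le_of_nonneg I.w_nonneg).trans (add_le_add ?_ ?_)
    · refine (Finset.sum_union_le_of_nonneg I.w_nonneg).trans (add_le_add ?_ ?_)
      · rw [Finset.sum_pair hbb', hB b hbA, hB b' hb'A]
      · exact Option.sum_toFinset_le
          (fun x hx => (hB x ((I.bipartite a x (M.valid a x hx)).1 ha)).le) zero_le_one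
    · refine Option.sum_toFinset_le (fun x hx => ?_) (by linarith)
      rw [hA x ((I.bipartite x b' (I.Esymm b' x (M.valid b' x hx))).2 hb'A)]
  linarith [hM N]

lemma exists_losing_mate (hM : popular I M) {c : ℚ} (hc : 3 < c) (hA : ∀ a ∈ I.A, I.w a = c)
    (hB : ∀ b ∉ I.A, I.w b = 1) (M' : Matching V I.E) {a : V} (ha : a ∈ I.A)
    (hwin : prefersVx I M' M a) :
    ∃ b a', M'.m a = some b ∧ M.m a' = some b ∧ a' ∈ I.A ∧ prefersVx I M M' a' := by
  obtain ⟨b, hb⟩ : ∃ b, M'.m a = some b := by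
    rcases hwin with ⟨_, h⟩ | ⟨b, _, h, _⟩
    · exact Option.ne_none_iff_exists'.1 h
    · exact ⟨b, h⟩
  have hab := M'.valid a b hb
  have hpref : PrefersToPartner I M a b := (prefersVx_iff_of_eq_some hb).1 hwin
  obtain ⟨a', hba'⟩ := hM.exists_mate hB ha (by rw [hA a ha]; linarith) hab hpref
  have hMa' : M.m a' = some b := (M.msymm b a').1 hba'
  refine ⟨b, a', hb, hMa', (I.bipartite a' b (M.valid a' b hMa')).2 ((I.bipartite a b hab).1 ha),
    (prefersVx_iff_of_eq_some hMa').2 fun b' hb' => ?_⟩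
  have hbb' : b ≠ b' := by
    rintro rfl
    have haa' : a = a' :=
      Option.some_inj.1 (((M'.msymm a b).1 hb).symm.trans ((M'.msymm a' b).1 hb'))
    exact I.pref_irrefl a b (hpref b (haa' ▸ hMa'))
  refine (I.pref_total a' b b' (M.valid a' b hMa') (M'.valid a' b' hb') hbb').resolve_right
    fun h => hM.not_prefersToPartner_of_mate hc hA hB ha hab hpref hba' (M'.valid a' b' hb')
      fun u hu => ?_
  rwa [← Option.some_inj.1 (hMa'.symm.trans hu)]

lemma card_winners_le (hM : popular I M) {c : ℚ} (hc : 3 < c) (hA : ∀ a ∈ I.A, I.w a = c)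
    (hB : ∀ b ∉ I.A, I.w b = 1) (M' : Matching V I.E) :
    (Finset.univ.filter fun v => prefersVx I M' M v ∧ v ∈ I.A).card ≤
      (Finset.univ.filter fun v => prefersVx I M M' v ∧ v ∈ I.A).card := by
  refine Finset.card_le_card_of_forall_subsingleton
    (fun a a' => ∃ b, M'.m a = some b ∧ M.m a' = some b) (fun a ha => ?_) ?_
  · simp only [Finset.mem_filter, Finset.mem_univ, true_and] at ha
    obtain ⟨b, a', hb, hMa', ha'A, hlose⟩ := hM.exists_losing_mate hc hA hB M' ha.2 ha.1
    exact ⟨a', by simp [hlose, ha'A], b, hb, hMa'⟩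
  · rintro a' - a₁ ⟨-, b₁, h₁, h₁'⟩ a₂ ⟨-, b₂, h₂, h₂'⟩
    obtain rfl : b₁ = b₂ := Option.some_inj.1 (h₁'.symm.trans h₂')
    exact Option.some_inj.1 (((M'.msymm a₁ b₁).1 h₁).symm.trans ((M'.msymm a₂ b₁).1 h₂))

end popular

/-- With `w(a) = c > 3` on `A` and `w(b) = 1` on `B`, any popular matching stays
popular after the `B`-weights are reduced to `0`. -/
theorem popular_of_zeroB (I : PMInstance V) (c : ℚ) (hc : 3 < c)
    (hA : ∀ a ∈ I.A, I.w a = c) (hB : ∀ b : V, b ∉ I.A → I.w b = 1)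
    (M : Matching V I.E) (hM : popular I M) :
    popular (zeroB I) M := by
  intro M'
  have hc0 : 0 ≤ c := by linarith
  calc weightPref (zeroB I) M' M
      = (Finset.univ.filter fun v => prefersVx I M' M v ∧ v ∈ I.A).card * c :=
        weightPref_zeroB I hA
    _ ≤ (Finset.univ.filter fun v => prefersVx I M M' v ∧ v ∈ I.A).card * c := by
        gcongr ?_ * c
        exact_mod_cast hM.card_winners_le hc hA hB M'
    _ = weightPref (zeroB I) M M' := (weightPref_zeroB I hA).symm
end

section
/- In a house allocation instance (agents A with strict preferences vote, houses B do not), a matching M is popular if and only if (1) every house b that is the first choice f(a) of some agent a is matched in M to an agent whose first choice is b, and (2) every agent a is matched to either f(a) or s(a), where s(a) is a's most preferred house among houses that are not the first choice of any agent. -/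
attribute [local instance] Classical.propDecidable

variable {V : Type} [Fintype V] [DecidableEq V]

/-- `b` is the first choice (`f`-post) of `a`. -/
def firstChoice (I : PMInstance V) (a b : V) : Prop :=
  I.E a b ∧ ∀ z : V, I.E a z → z ≠ b → I.pref a b z

/-- `b` is the `s`-post of `a`: best-ranked neighbor among vertices that are
no vertex's first choice. -/
def sPost (I : PMInstance V) (a b : V) : Prop :=
  I.E a b ∧ (¬ ∃ a' : V, firstChoice I a' b) ∧
    ∀ z : V, I.E a z → z ≠ b → (¬ ∃ a' : V, firstChoice I a' z) → I.pref a b z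


section Helpers

variable (I : PMInstance V)

lemma notA_of_E {a b : V} (ha : a ∈ I.A) (hE : I.E a b) : b ∉ I.A :=
  (I.bipartite a b hE).mp ha

lemma inA_of_E {a b : V} (hb : b ∉ I.A) (hE : I.E a b) : a ∈ I.A := by
  by_contra h
  exact hb (((I.bipartite b a (I.Esymm a b hE)).mpr h))

lemma ne_of_E {a b : V} (hE : I.E a b) : a ≠ b := by
  rintro rfl; exact I.loopless a hE

/-- Existence of a pref-maximal element in a finite nonempty set of neighbors. -/
lemma exists_pref_max (a : V) (C : Finset V) (hne : C.Nonempty)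
    (hC : ∀ z ∈ C, I.E a z) :
    ∃ b ∈ C, ∀ z ∈ C, z ≠ b → I.pref a b z := by
  classical
  induction C using Finset.induction_on with
  | empty => exact absurd hne (by simp)
  | @insert x s hx ih =>
    rcases s.eq_empty_or_nonempty with rfl | hs
    · exact ⟨x, by simp, by simp⟩
    · obtain ⟨b, hbs, hb⟩ := ih hs (fun z hz => hC z (Finset.mem_insert_of_mem hz))
      have hxb : x ≠ b := by rintro rfl; exact hx hbs
      have hEx : I.E a x := hC x (Finset.mem_insert_self x s)
      have hEb : I.E a b := hC b (Finset.mem_insert_of_mem hbs)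
      rcases I.pref_total a x b hEx hEb hxb with h | h
      · refine ⟨x, Finset.mem_insert_self x s, ?_⟩
        intro z hz hzx
        rcases Finset.mem_insert.mp hz with rfl | hzs
        · exact absurd rfl hzx
        · by_cases hzb : z = b
          · subst hzb; exact h
          · exact I.pref_trans a x b z h (hb z hzs hzb)
      · refine ⟨b, Finset.mem_insert_of_mem hbs, ?_⟩
        intro z hz hzb
        rcases Finset.mem_insert.mp hz with rfl | hzs
        · exact h
        · exact hb z hzs hzb

/-- Every vertex with a neighbor has a first choice. -/
lemma exists_firstChoice {a z : V} (hz : I.E a z) : ∃ b : V, firstChoice I a b := by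
  classical
  obtain ⟨b, hbC, hb⟩ := exists_pref_max I a (Finset.univ.filter (fun t => I.E a t))
    ⟨z, by simp [hz]⟩ (fun t ht => (Finset.mem_filter.mp ht).2)
  exact ⟨b, (Finset.mem_filter.mp hbC).2, fun t ht htb => hb t (by simp [ht]) htb⟩

/-- If some neighbor of `a` is nobody's first choice, then `a` has an s-post. -/
lemma exists_sPost {a z : V} (hz : I.E a z) (hnf : ¬ ∃ a' : V, firstChoice I a' z) :
    ∃ b : V, sPost I a b := by
  classical
  obtain ⟨b, hbC, hb⟩ := exists_pref_max I a
    (Finset.univ.filter (fun t => I.E a t ∧ ¬ ∃ a' : V, firstChoice I a' t))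
    ⟨z, by simp only [Finset.mem_filter, Finset.mem_univ, true_and]; exact ⟨hz, hnf⟩⟩
    (fun t ht => (Finset.mem_filter.mp ht).2.1)
  obtain ⟨-, hEb, hnfb⟩ := Finset.mem_filter.mp hbC
  exact ⟨b, hEb, hnfb, fun t ht htb hnft => hb t (by
    simp only [Finset.mem_filter, Finset.mem_univ, true_and]; exact ⟨ht, hnft⟩) htb⟩

/-- Modify a matching by forcing edge `(a,p)`, unmatching their old partners. -/
def force (M : Matching V I.E) (a p : V) (hE : I.E a p) : Matching V I.E where
  m v := if v = a then some p else if v = p then some a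
    else if M.m v = some a ∨ M.m v = some p then none else M.m v
  msymm := by
    classical
    have hap : a ≠ p := ne_of_E I hE
    have key : ∀ u v : V,
        (if u = a then some p else if u = p then some a
          else if M.m u = some a ∨ M.m u = some p then none else M.m u) = some v →
        (if v = a then some p else if v = p then some a
          else if M.m v = some a ∨ M.m v = some p then none else M.m v) = some u := by
      intro u v h
      by_cases hua : u = a
      · subst hua
        rw [if_pos rfl] at h
        injection h with h
        subst h
        simp [hap.symm]
      · by_cases hup : u = p
        · subst hup
          rw [if_neg hua, if_pos rfl] at h
          injection h with h
          subst h
          simp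
        · rw [if_neg hua, if_neg hup] at h
          by_cases hm : M.m u = some a ∨ M.m u = some p
          · rw [if_pos hm] at h; exact absurd h (by simp)
          · rw [if_neg hm] at h
            push_neg at hm
            have hva : v ≠ a := by rintro rfl; exact hm.1 h
            have hvp : v ≠ p := by rintro rfl; exact hm.2 h
            have hmv : M.m v = some u := (M.msymm u v).mp h
            rw [if_neg hva, if_neg hvp, if_neg (by
              push_neg
              constructor
              · rw [hmv]; simp [hua]
              · rw [hmv]; simp [hup])]
            exact hmv
    intro u v
    exact ⟨key u v, key v u⟩
  valid := by
    classical
    have hap : a ≠ p := ne_of_E I hE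
    intro u v h
    by_cases hua : u = a
    · rw [if_pos hua] at h
      injection h with h
      rw [hua, ← h]; exact hE
    · by_cases hup : u = p
      · rw [if_neg hua, if_pos hup] at h
        injection h with h
        rw [hup, ← h]; exact I.Esymm a p hE
      · rw [if_neg hua, if_neg hup] at h
        by_cases hm : M.m u = some a ∨ M.m u = some p
        · rw [if_pos hm] at h; exact absurd h (by simp)
        · rw [if_neg hm] at h; exact M.valid u v h

variable {I}

lemma force_left (M : Matching V I.E) (a p : V) (hE : I.E a p) :
    (force I M a p hE).m a = some p := by
  simp [force]

lemma force_right (M : Matching V I.E) (a p : V) (hE : I.E a p) :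
    (force I M a p hE).m p = some a := by
  have hap : a ≠ p := ne_of_E I hE
  simp [force, hap.symm]

lemma force_unchanged (M : Matching V I.E) (a p : V) (hE : I.E a p) {v : V}
    (h1 : v ≠ a) (h2 : v ≠ p) (h3 : M.m v ≠ some a) (h4 : M.m v ≠ some p) :
    (force I M a p hE).m v = M.m v := by
  simp only [force, if_neg h1, if_neg h2]
  rw [if_neg (by push_neg; exact ⟨h3, h4⟩)]

/-- If `v`'s matched edge is unchanged between `M'` and `M`, `v` prefers neither. -/
lemma not_prefers_of_same (M M' : Matching V I.E) {v : V}
    (h : M'.m v = M.m v) : ¬ prefersVx I M M' v := by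
  rintro (⟨h1, h2⟩ | ⟨u, u', hu, hu', hp⟩)
  · exact h2 (h ▸ h1)
  · rw [h, hu] at hu'
    have : u = u' := by injection hu'
    exact I.pref_irrefl v u' (this ▸ hp)

/-- A vertex matched by `M'` to something it prefers over its `M`-partner
does not prefer `M` to `M'`. -/
lemma not_prefers_of_better (M M' : Matching V I.E) {v t : V}
    (ht : M'.m v = some t)
    (hbetter : ∀ u : V, M.m v = some u → u ≠ t → I.pref v t u) :
    ¬ prefersVx I M M' v := by
  rintro (⟨h1, h2⟩ | ⟨u, u', hu, hu', hp⟩)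
  · rw [ht] at h1; exact absurd h1 (by simp)
  · rw [ht] at hu'
    injection hu' with h
    subst h
    by_cases hut : u = t
    · exact I.pref_irrefl v t (hut ▸ hp)
    · exact I.pref_asymm v t u (hbetter u hu hut) hp

/-- Key counting lemma: if all of `S` prefer `M'` and every positive-weight
vertex preferring `M` lies in `T`, with `T` lighter than `S`, then `M'` beats `M`. -/
lemma beats (M M' : Matching V I.E) (S T : Finset V)
    (hS : ∀ v ∈ S, prefersVx I M' M v)
    (hT : ∀ v : V, prefersVx I M M' v → I.w v ≠ 0 → v ∈ T)
    (hlt : ∑ v ∈ T, I.w v < ∑ v ∈ S, I.w v) :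
    weightPref I M M' < weightPref I M' M := by
  classical
  have h1 : ∑ v ∈ S, I.w v ≤ weightPref I M' M := by
    unfold weightPref
    calc ∑ v ∈ S, I.w v
        = ∑ v ∈ S, (if prefersVx I M' M v then I.w v else 0) :=
          Finset.sum_congr rfl (fun v hv => (if_pos (hS v hv)).symm)
      _ ≤ ∑ v : V, (if prefersVx I M' M v then I.w v else 0) := by
          apply Finset.sum_le_sum_of_subset_of_nonneg (Finset.subset_univ S)
          intro v _ _
          split
          · exact I.w_nonneg v
          · exact le_refl 0
  have h2 : weightPref I M M' ≤ ∑ v ∈ T, I.w v := by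
    unfold weightPref
    calc ∑ v : V, (if prefersVx I M M' v then I.w v else 0)
        ≤ ∑ v : V, (if v ∈ T then I.w v else 0) := by
          apply Finset.sum_le_sum
          intro v _
          by_cases hp : prefersVx I M M' v
          · rw [if_pos hp]
            by_cases hvT : v ∈ T
            · rw [if_pos hvT]
            · rw [if_neg hvT]
              by_contra hw
              push_neg at hw
              exact hvT (hT v hp (by linarith [I.w_nonneg v]))
          · rw [if_neg hp]
            split
            · exact I.w_nonneg v
            · exact le_refl 0
      _ = ∑ v ∈ T, I.w v := by
          rw [Finset.sum_ite_mem, Finset.univ_inter]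
  linarith

lemma firstChoice_unique {a b b' : V} (h : firstChoice I a b) (h' : firstChoice I a b') :
    b = b' := by
  by_contra hne
  exact I.pref_asymm a b b' (h.2 b' h'.1 (Ne.symm hne)) (h'.2 b h.1 hne)

end Helpers


section MainLemmas

variable {I : PMInstance V} {M : Matching V I.E}

lemma not_prefers_of_unmatched (M M' : Matching V I.E) {v : V} (h : M.m v = none) :
    ¬ prefersVx I M M' v := by
  rintro (⟨_, h2⟩ | ⟨u, u', hu, _, _⟩)
  · exact h2 h
  · rw [h] at hu; exact absurd hu (by simp)

lemma partner_notA {a v : V} (haA : a ∈ I.A) (h : M.m v = some a) : v ∉ I.A :=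
  fun hvA => ((I.bipartite v a (M.valid v a h)).mp hvA) haA

lemma sum_partner_le_one (hA : ∀ a ∈ I.A, I.w a = 1) (M : Matching V I.E) {p : V}
    (hp : p ∉ I.A) :
    ∑ v ∈ Finset.univ.filter (fun v => M.m v = some p), I.w v ≤ 1 := by
  classical
  cases hT : M.m p with
  | none =>
    have : Finset.univ.filter (fun v => M.m v = some p) = ∅ := by
      apply Finset.eq_empty_of_forall_notMem
      intro v hv
      have := (M.msymm v p).mp (Finset.mem_filter.mp hv).2
      rw [hT] at this; exact absurd this (by simp)
    rw [this, Finset.sum_empty]; norm_num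
  | some d =>
    have hdA : d ∈ I.A := inA_of_E I hp (I.Esymm p d (M.valid p d hT))
    have hsub : Finset.univ.filter (fun v => M.m v = some p) ⊆ {d} := by
      intro v hv
      have := (M.msymm v p).mp (Finset.mem_filter.mp hv).2
      rw [hT] at this
      injection this with h
      simp [h]
    calc ∑ v ∈ Finset.univ.filter (fun v => M.m v = some p), I.w v
        ≤ ∑ v ∈ ({d} : Finset V), I.w v :=
          Finset.sum_le_sum_of_subset_of_nonneg hsub (fun v _ _ => I.w_nonneg v)
      _ = I.w d := Finset.sum_singleton _ _
      _ ≤ 1 := le_of_eq (hA d hdA)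

/-- Condition (1) holds for a popular matching. -/
lemma cond1_of_popular (hA : ∀ a ∈ I.A, I.w a = 1) (hB : ∀ b : V, b ∉ I.A → I.w b = 0)
    (hpop : popular I M) :
    ∀ b : V, (∃ a ∈ I.A, firstChoice I a b) →
      ∃ a : V, M.m b = some a ∧ firstChoice I a b := by
  intro b ⟨a, haA, hfc⟩
  by_contra hno
  push_neg at hno
  have hEab : I.E a b := hfc.1
  have hbA : b ∉ I.A := notA_of_E I haA hEab
  cases hb : M.m b with
  | none =>
    -- M' : promote a to b
    set M' := force I M a b hEab with hM'
    have hM'a : M'.m a = some b := force_left M a b hEab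
    have himp : prefersVx I M' M a := by
      cases hma : M.m a with
      | none => exact Or.inl ⟨hma, by rw [hM'a]; simp⟩
      | some u =>
        right
        refine ⟨b, u, hM'a, hma, hfc.2 u (M.valid a u hma) ?_⟩
        rintro rfl
        rw [(M.msymm a u).mp hma] at hb
        exact absurd hb (by simp)
    have hloser : ∀ v : V, prefersVx I M M' v → I.w v ≠ 0 → v ∈ (∅ : Finset V) := by
      intro v hv hw
      exfalso
      have hvA : v ∈ I.A := by
        by_contra h; exact hw (hB v h)
      by_cases hva : v = a
      · subst hva
        exact not_prefers_of_better M M' hM'a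
          (fun u hu hub => hfc.2 u (M.valid v u hu) hub) hv
      · have hvb : v ≠ b := by rintro rfl; exact hbA hvA
        have h3 : M.m v ≠ some a := fun h => partner_notA haA h hvA
        have h4 : M.m v ≠ some b := by
          intro h
          rw [(M.msymm v b).mp h] at hb; exact absurd hb (by simp)
        exact not_prefers_of_same M M' (force_unchanged M a b hEab hva hvb h3 h4) hv
    have hbeats := beats M M' ({a} : Finset V) ∅ (fun v hv => by
        rw [Finset.mem_singleton] at hv; subst hv; exact himp) hloser
        (by rw [Finset.sum_singleton, Finset.sum_empty, hA a haA]; norm_num)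
    exact absurd (hpop M') (not_le.mpr hbeats)
  | some a' =>
    have hnfc' : ¬ firstChoice I a' b := hno a' hb
    have hEba' : I.E b a' := M.valid b a' hb
    have hEa'b : I.E a' b := I.Esymm b a' hEba'
    have ha'A : a' ∈ I.A := inA_of_E I hbA hEa'b
    have haa' : a ≠ a' := by rintro rfl; exact hnfc' hfc
    obtain ⟨p', hp'⟩ := exists_firstChoice I hEa'b
    have hbp' : b ≠ p' := by rintro rfl; exact hnfc' hp'
    have hp'A : p' ∉ I.A := notA_of_E I ha'A hp'.1
    have hprefp' : I.pref a' p' b := hp'.2 b hEa'b hbp'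
    set N := force I M a' p' hp'.1 with hN
    set M' := force I N a b hEab with hM'
    have hM'a : M'.m a = some b := force_left N a b hEab
    have hap' : a ≠ p' := fun h => hp'A (h ▸ haA)
    have hba' : b ≠ a' := by rintro rfl; exact hbA ha'A
    have hM'a' : M'.m a' = some p' := by
      rw [hM']
      rw [force_unchanged N a b hEab haa'.symm (Ne.symm hba')
        (by rw [hN, force_left]; simp [Ne.symm hap'])
        (by rw [hN, force_left]; simp [Ne.symm hbp'])]
      rw [hN, force_left]
    have hMa' : M.m a' = some b := (M.msymm b a').mp hb
    have himpa : prefersVx I M' M a := by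
      cases hma : M.m a with
      | none => exact Or.inl ⟨hma, by rw [hM'a]; simp⟩
      | some u =>
        right
        refine ⟨b, u, hM'a, hma, hfc.2 u (M.valid a u hma) ?_⟩
        intro hub
        rw [hub] at hma
        rw [(M.msymm a b).mp hma] at hb
        injection hb with h
        exact haa' h
    have himpa' : prefersVx I M' M a' := Or.inr ⟨p', b, hM'a', hMa', hprefp'⟩
    set T := Finset.univ.filter (fun v => M.m v = some p') with hT
    have hloser : ∀ v : V, prefersVx I M M' v → I.w v ≠ 0 → v ∈ T := by
      intro v hv hw
      have hvA : v ∈ I.A := by by_contra h; exact hw (hB v h)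
      by_cases hva : v = a
      · subst hva
        exact absurd hv (not_prefers_of_better M M' hM'a
          (fun u hu hub => hfc.2 u (M.valid v u hu) hub))
      · by_cases hva' : v = a'
        · subst hva'
          exact absurd hv (not_prefers_of_better M M' hM'a'
            (fun u hu hup => hp'.2 u (M.valid v u hu) hup))
        · by_cases hvp : M.m v = some p'
          · rw [hT]; simp [hvp]
          · exfalso
            have hvb : v ≠ b := by rintro rfl; exact hbA hvA
            have hvp' : v ≠ p' := by rintro rfl; exact hp'A hvA
            have h3 : M.m v ≠ some a' := by
              intro h
              rw [(M.msymm v a').mp h] at hMa'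
              injection hMa' with h'
              exact hvb h'
            have hNv : N.m v = M.m v := force_unchanged M a' p' hp'.1 hva' hvp' h3 hvp
            have h5 : M.m v ≠ some a := fun h => partner_notA haA h hvA
            have h6 : M.m v ≠ some b := by
              intro h
              have := (M.msymm v b).mp h
              rw [hb] at this
              injection this with h'
              exact hva' h'.symm
            have : M'.m v = M.m v := by
              rw [hM', force_unchanged N a b hEab hva hvb (hNv ▸ h5) (hNv ▸ h6), hNv]
            exact not_prefers_of_same M M' this hv
    have hbeats := beats M M' ({a, a'} : Finset V) T (fun v hv => by
        rcases Finset.mem_insert.mp hv with rfl | hv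
        · exact himpa
        · rw [Finset.mem_singleton] at hv; subst hv; exact himpa') hloser (by
        rw [Finset.sum_pair haa', hA a haA, hA a' ha'A]
        have := sum_partner_le_one hA M hp'A
        rw [← hT] at this
        linarith)
    exact absurd (hpop M') (not_le.mpr hbeats)


/-- Core construction for condition (2): if `a` has an s-post `s` it is not
matched to, prefers `s` to its current post, and its current post (if any) is
nobody's first choice, then `M` is beaten. -/
lemma cond2_aux (hA : ∀ a ∈ I.A, I.w a = 1) (hB : ∀ b : V, b ∉ I.A → I.w b = 0)
    (hpop : popular I M)
    (h1 : ∀ b : V, (∃ a ∈ I.A, firstChoice I a b) →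
      ∃ c : V, M.m b = some c ∧ firstChoice I c b)
    {a s : V} (haA : a ∈ I.A) (hs : sPost I a s)
    (hbet : ∀ b : V, M.m a = some b → I.pref a s b)
    (hnotf : ∀ b : V, M.m a = some b → ¬ ∃ a' : V, firstChoice I a' b) : False := by
  have hEas : I.E a s := hs.1
  have hsA : s ∉ I.A := notA_of_E I haA hEas
  have hMas : M.m a ≠ some s := by
    intro h
    exact I.pref_irrefl a s (hbet s h)
  cases hms : M.m s with
  | none =>
    set M' := force I M a s hEas with hM'
    have hM'a : M'.m a = some s := force_left M a s hEas
    have himp : prefersVx I M' M a := by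
      cases hma : M.m a with
      | none => exact Or.inl ⟨hma, by rw [hM'a]; simp⟩
      | some u => exact Or.inr ⟨s, u, hM'a, hma, hbet u hma⟩
    have hloser : ∀ v : V, prefersVx I M M' v → I.w v ≠ 0 → v ∈ (∅ : Finset V) := by
      intro v hv hw
      exfalso
      have hvA : v ∈ I.A := by by_contra h; exact hw (hB v h)
      by_cases hva : v = a
      · subst hva
        exact not_prefers_of_better M M' hM'a (fun u hu _ => hbet u hu) hv
      · have hvs : v ≠ s := by rintro rfl; exact hsA hvA
        have h3 : M.m v ≠ some a := fun h => partner_notA haA h hvA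
        have h4 : M.m v ≠ some s := by
          intro h
          have := (M.msymm v s).mp h
          rw [hms] at this
          exact absurd this (by simp)
        exact not_prefers_of_same M M' (force_unchanged M a s hEas hva hvs h3 h4) hv
    have hbeats := beats M M' ({a} : Finset V) ∅ (fun v hv => by
        rw [Finset.mem_singleton] at hv; subst hv; exact himp) hloser
        (by rw [Finset.sum_singleton, Finset.sum_empty, hA a haA]; norm_num)
    exact absurd (hpop M') (not_le.mpr hbeats)
  | some c =>
    have hEsc : I.E s c := M.valid s c hms
    have hEcs : I.E c s := I.Esymm s c hEsc
    have hcA : c ∈ I.A := inA_of_E I hsA hEcs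
    have hca : c ≠ a := by
      rintro rfl
      exact hMas ((M.msymm s c).mp hms)
    obtain ⟨p, hpc⟩ := exists_firstChoice I hEcs
    have hps : p ≠ s := by rintro rfl; exact hs.2.1 ⟨c, hpc⟩
    have hpA : p ∉ I.A := notA_of_E I hcA hpc.1
    have hprefps : I.pref c p s := hpc.2 s hEcs (Ne.symm hps)
    obtain ⟨d, hd, hfcd⟩ := h1 p ⟨c, hcA, hpc⟩
    have hMc : M.m c = some s := (M.msymm s c).mp hms
    have hcs : c ≠ s := by rintro rfl; exact hsA hcA
    have hpa : p ≠ a := by rintro rfl; exact hpA haA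
    set N := force I M c p hpc.1 with hN
    set M' := force I N a s hEas with hM'
    have hM'a : M'.m a = some s := force_left N a s hEas
    have hM'c : M'.m c = some p := by
      rw [hM']
      rw [force_unchanged N a s hEas hca hcs
        (by rw [hN, force_left]; simp [hpa])
        (by rw [hN, force_left]; simp [hps])]
      rw [hN, force_left]
    have himpa : prefersVx I M' M a := by
      cases hma : M.m a with
      | none => exact Or.inl ⟨hma, by rw [hM'a]; simp⟩
      | some u => exact Or.inr ⟨s, u, hM'a, hma, hbet u hma⟩
    have himpc : prefersVx I M' M c := Or.inr ⟨p, s, hM'c, hMc, hprefps⟩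
    set T := Finset.univ.filter (fun v => M.m v = some p) with hT
    have hloser : ∀ v : V, prefersVx I M M' v → I.w v ≠ 0 → v ∈ T := by
      intro v hv hw
      have hvA : v ∈ I.A := by by_contra h; exact hw (hB v h)
      by_cases hva : v = a
      · subst hva
        exact absurd hv (not_prefers_of_better M M' hM'a (fun u hu _ => hbet u hu))
      · by_cases hvc : v = c
        · subst hvc
          exact absurd hv (not_prefers_of_better M M' hM'c
            (fun u hu hup => hpc.2 u (M.valid v u hu) hup))
        · by_cases hvp : M.m v = some p
          · rw [hT]; simp [hvp]
          · exfalso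
            have hvs : v ≠ s := by rintro rfl; exact hsA hvA
            have hvp' : v ≠ p := by rintro rfl; exact hpA hvA
            have h3 : M.m v ≠ some c := fun h => partner_notA hcA h hvA
            have hNv : N.m v = M.m v := force_unchanged M c p hpc.1 hvc hvp' h3 hvp
            have h5 : M.m v ≠ some a := fun h => partner_notA haA h hvA
            have h6 : M.m v ≠ some s := by
              intro h
              have := (M.msymm v s).mp h
              rw [hms] at this
              injection this with h'
              exact hvc h'.symm
            have : M'.m v = M.m v := by
              rw [hM', force_unchanged N a s hEas hva hvs (hNv ▸ h5) (hNv ▸ h6), hNv]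
            exact not_prefers_of_same M M' this hv
    have hac : a ≠ c := Ne.symm hca
    have hbeats := beats M M' ({a, c} : Finset V) T (fun v hv => by
        rcases Finset.mem_insert.mp hv with rfl | hv
        · exact himpa
        · rw [Finset.mem_singleton] at hv; subst hv; exact himpc) hloser (by
        rw [Finset.sum_pair hac, hA a haA, hA c hcA]
        have := sum_partner_le_one hA M hpA
        rw [← hT] at this
        linarith)
    exact absurd (hpop M') (not_le.mpr hbeats)

/-- Condition (2) holds for a popular matching. -/
lemma cond2_of_popular (hA : ∀ a ∈ I.A, I.w a = 1) (hB : ∀ b : V, b ∉ I.A → I.w b = 0)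
    (hpop : popular I M) :
    ∀ a ∈ I.A,
      (∃ b : V, M.m a = some b ∧ (firstChoice I a b ∨ sPost I a b)) ∨
        (M.m a = none ∧ ∀ b : V, ¬ sPost I a b) := by
  have h1 := cond1_of_popular hA hB hpop
  intro a haA
  by_contra hno
  push_neg at hno
  obtain ⟨hno1, hno2⟩ := hno
  cases hma : M.m a with
  | none =>
    obtain ⟨s, hss⟩ := hno2 hma
    exact cond2_aux hA hB hpop h1 haA hss
      (fun b hb => by rw [hma] at hb; exact absurd hb (by simp))
      (fun b hb => by rw [hma] at hb; exact absurd hb (by simp))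
  | some b =>
    have hnot := hno1 b hma
    obtain ⟨hnfc, hnsp⟩ := hnot
    have hEab : I.E a b := M.valid a b hma
    have hbA : b ∉ I.A := notA_of_E I haA hEab
    have hbnf : ¬ ∃ a' : V, firstChoice I a' b := by
      rintro ⟨a'', hfc''⟩
      obtain ⟨c, hc, hfcc⟩ := h1 b ⟨a'', inA_of_E I hbA hfc''.1, hfc''⟩
      rw [(M.msymm a b).mp hma] at hc
      injection hc with h
      exact hnfc (by rw [h]; exact hfcc)
    obtain ⟨s, hss⟩ := exists_sPost I hEab hbnf
    have hsb : s ≠ b := by rintro rfl; exact hnsp hss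
    have hps : I.pref a s b := hss.2.2 b hEab (Ne.symm hsb) hbnf
    refine cond2_aux hA hB hpop h1 haA hss ?_ ?_
    · intro u hu
      rw [hma] at hu
      injection hu with h
      rw [← h]; exact hps
    · intro u hu
      rw [hma] at hu
      injection hu with h
      rw [← h]; exact hbnf


lemma weightPref_eq_card (hA : ∀ a ∈ I.A, I.w a = 1) (hB : ∀ b : V, b ∉ I.A → I.w b = 0)
    (M M' : Matching V I.E) :
    weightPref I M M' = ((I.A.filter (fun v => prefersVx I M M' v)).card : ℚ) := by
  classical
  unfold weightPref
  have hcong : ∀ v ∈ Finset.univ, (if prefersVx I M M' v then I.w v else 0)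
      = (if v ∈ I.A.filter (fun v => prefersVx I M M' v) then (1 : ℚ) else 0) := by
    intro v _
    by_cases hp : prefersVx I M M' v
    · by_cases hv : v ∈ I.A
      · rw [if_pos hp, if_pos (Finset.mem_filter.mpr ⟨hv, hp⟩), hA v hv]
      · rw [if_pos hp, hB v hv, if_neg (fun h => hv (Finset.mem_filter.mp h).1)]
    · rw [if_neg hp, if_neg (fun h => hp (Finset.mem_filter.mp h).2)]
  rw [Finset.sum_congr rfl hcong, Finset.sum_ite_mem, Finset.univ_inter,
    Finset.sum_const, nsmul_eq_mul, mul_one]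

/-- Structure of an agent preferring `M'` to a matching satisfying both conditions. -/
lemma improver_struct
    (h1 : ∀ b : V, (∃ a ∈ I.A, firstChoice I a b) →
      ∃ c : V, M.m b = some c ∧ firstChoice I c b)
    (h2 : ∀ a ∈ I.A,
      (∃ b : V, M.m a = some b ∧ (firstChoice I a b ∨ sPost I a b)) ∨
        (M.m a = none ∧ ∀ b : V, ¬ sPost I a b))
    (M' : Matching V I.E) {a : V} (haA : a ∈ I.A) (hpref : prefersVx I M' M a) :
    ∃ p c : V, M'.m a = some p ∧ M.m p = some c ∧ firstChoice I c p ∧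
      c ∈ I.A ∧ c ≠ a ∧ prefersVx I M M' c := by
  obtain ⟨p, hMp, hinfo⟩ : ∃ p : V, M'.m a = some p ∧
      (M.m a = none ∨ ∃ u' : V, M.m a = some u' ∧ I.pref a p u') := by
    rcases hpref with ⟨h1', h2'⟩ | ⟨u, u', hu, hu', hp⟩
    · cases hM : M'.m a with
      | none => exact absurd hM h2'
      | some p => exact ⟨p, rfl, Or.inl h1'⟩
    · exact ⟨u, hu, Or.inr ⟨u', hu', hp⟩⟩
  have hEap : I.E a p := M'.valid a p hMp
  have hpA : p ∉ I.A := notA_of_E I haA hEap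
  have hfp : ∃ a' : V, firstChoice I a' p := by
    rcases h2 a haA with ⟨b, hMab, hfc | hsp⟩ | ⟨hnone, hnosp⟩
    · exfalso
      rcases hinfo with hnone | ⟨u', hu', hp'⟩
      · rw [hMab] at hnone; exact absurd hnone (by simp)
      · rw [hMab] at hu'
        injection hu' with h
        subst h
        by_cases hpb : p = b
        · exact I.pref_irrefl a b (hpb ▸ hp')
        · exact I.pref_asymm a b p (hfc.2 p hEap hpb) hp'
    · rcases hinfo with hnone | ⟨u', hu', hp'⟩
      · rw [hMab] at hnone; exact absurd hnone (by simp)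
      · rw [hMab] at hu'
        injection hu' with h
        subst h
        by_contra hnf
        by_cases hpb : p = b
        · exact I.pref_irrefl a b (hpb ▸ hp')
        · exact I.pref_asymm a b p (hsp.2.2 p hEap hpb hnf) hp'
    · by_contra hnf
      obtain ⟨t, ht⟩ := exists_sPost I hEap hnf
      exact hnosp t ht
  obtain ⟨a'', hfa''⟩ := hfp
  obtain ⟨c, hMpc, hfcc⟩ := h1 p ⟨a'', inA_of_E I hpA hfa''.1, hfa''⟩
  have hEpc : I.E p c := M.valid p c hMpc
  have hcA : c ∈ I.A := inA_of_E I hpA (I.Esymm p c hEpc)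
  have hMcp : M.m c = some p := (M.msymm p c).mp hMpc
  have hca : c ≠ a := by
    rintro rfl
    rcases hinfo with hnone | ⟨u', hu', hp'⟩
    · rw [hMcp] at hnone; exact absurd hnone (by simp)
    · rw [hMcp] at hu'
      injection hu' with h
      rw [← h] at hp'
      exact I.pref_irrefl c p hp'
  have hprefc : prefersVx I M M' c := by
    cases hM'c : M'.m c with
    | none => exact Or.inl ⟨hM'c, by rw [hMcp]; simp⟩
    | some q =>
      have hqp : q ≠ p := by
        rintro rfl
        have hthis := (M'.msymm c q).mp hM'c
        rw [(M'.msymm a q).mp hMp] at hthis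
        injection hthis with h
        exact hca h.symm
      exact Or.inr ⟨p, q, hMcp, hM'c, hfcc.2 q (M'.valid c q hM'c) hqp⟩
  exact ⟨p, c, hMp, hMpc, hfcc, hcA, hca, hprefc⟩

/-- The two conditions imply popularity. -/
lemma popular_of_conds (hA : ∀ a ∈ I.A, I.w a = 1) (hB : ∀ b : V, b ∉ I.A → I.w b = 0)
    (h1 : ∀ b : V, (∃ a ∈ I.A, firstChoice I a b) →
      ∃ c : V, M.m b = some c ∧ firstChoice I c b)
    (h2 : ∀ a ∈ I.A,
      (∃ b : V, M.m a = some b ∧ (firstChoice I a b ∨ sPost I a b)) ∨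
        (M.m a = none ∧ ∀ b : V, ¬ sPost I a b)) :
    popular I M := by
  intro M'
  rw [weightPref_eq_card hA hB M' M, weightPref_eq_card hA hB M M', Nat.cast_le]
  classical
  set φ : V → V := fun v => ((M.m ((M'.m v).getD v)).getD v) with hφ
  apply Finset.card_le_card_of_injOn φ
  · intro v hv
    obtain ⟨hvA, hpref⟩ := Finset.mem_filter.mp hv
    obtain ⟨p, c, hMp, hMpc, hfcc, hcA, hca, hprefc⟩ := improver_struct h1 h2 M' hvA hpref
    have hval : φ v = c := by rw [hφ]; simp [hMp, hMpc]
    rw [hval]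
    exact Finset.mem_filter.mpr ⟨hcA, hprefc⟩
  · intro v1 hv1 v2 hv2 heq
    rw [Finset.mem_coe, Finset.mem_filter] at hv1 hv2
    obtain ⟨p1, c1, hMp1, hMpc1, -, -, -, -⟩ := improver_struct h1 h2 M' hv1.1 hv1.2
    obtain ⟨p2, c2, hMp2, hMpc2, -, -, -, -⟩ := improver_struct h1 h2 M' hv2.1 hv2.2
    have e1 : φ v1 = c1 := by rw [hφ]; simp [hMp1, hMpc1]
    have e2 : φ v2 = c2 := by rw [hφ]; simp [hMp2, hMpc2]
    have hc : c1 = c2 := by rw [← e1, ← e2, heq]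
    have hq1 : M.m c1 = some p1 := (M.msymm p1 c1).mp hMpc1
    have hq2 : M.m c2 = some p2 := (M.msymm p2 c2).mp hMpc2
    rw [← hc, hq1] at hq2
    injection hq2 with hp
    have r1 : M'.m p1 = some v1 := (M'.msymm v1 p1).mp hMp1
    have r2 : M'.m p2 = some v2 := (M'.msymm v2 p2).mp hMp2
    rw [← hp, r1] at r2
    injection r2

end MainLemmas

/-- Abraham et al.'s characterization of popular matchings in house allocation
instances (agents in `A` have weight 1, houses in `B` weight 0). -/
theorem houseAllocation_popular_iff (I : PMInstance V)
    (hA : ∀ a ∈ I.A, I.w a = 1) (hB : ∀ b : V, b ∉ I.A → I.w b = 0)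
    (M : Matching V I.E) :
    popular I M ↔
      ((∀ b : V, (∃ a ∈ I.A, firstChoice I a b) →
          ∃ a : V, M.m b = some a ∧ firstChoice I a b) ∧
        (∀ a ∈ I.A,
          (∃ b : V, M.m a = some b ∧ (firstChoice I a b ∨ sPost I a b)) ∨
            (M.m a = none ∧ ∀ b : V, ¬ sPost I a b))) := by
  constructor
  · intro hpop
    exact ⟨cond1_of_popular hA hB hpop, cond2_of_popular hA hB hpop⟩
  · rintro ⟨h1, h2⟩
    exact popular_of_conds hA hB h1 h2
end

section
/- Let M1 and M2 be two popular matchings in a vertex-weighted bipartite instance, and let C be a connected component of the symmetric difference M1 △ M2. Then every witness y1 of M1 and every witness y2 of M2 is tight on every edge e = {a,b} of C, meaning y_a + y_b = vote^{M_i}(e) for the respective matching M_i. -/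
attribute [local instance] Classical.propDecidable

variable {V : Type} [Fintype V] [DecidableEq V]

/-- Edge relation of the symmetric difference of two matchings. -/
def symmDiffRel {E : V → V → Prop} (M₁ M₂ : Matching V E) (u v : V) : Prop :=
  (M₁.m u = some v ∧ M₂.m u ≠ some v) ∨ (M₂.m u = some v ∧ M₁.m u ≠ some v)

/-- The vote of `v` for its `N`-partner (or for being unmatched) against `M`. -/
noncomputable def voteN (I : PMInstance V) (M N : Matching V I.E) (v : V) : ℚ :=
  ((N.m v).map (vote I M v)).getD (if M.m v = none then 0 else - I.w v)

lemma voteN_eq (I : PMInstance V) (M N : Matching V I.E) (v : V) :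
    voteN I M N v =
      (if prefersVx I N M v then I.w v else 0) -
        (if prefersVx I M N v then I.w v else 0) := by
  rcases hN : N.m v with _ | u
  · have h1 : ¬ prefersVx I N M v := by
      rintro (⟨_, h⟩ | ⟨a, b, h, _, _⟩) <;> simp [hN] at h
    rcases hM : M.m v with _ | z
    · have h2 : ¬ prefersVx I M N v := by
        rintro (⟨_, h⟩ | ⟨a, b, h, _, _⟩) <;> simp [hM] at h
      simp [voteN, hN, hM, h1, h2]
    · have h2 : prefersVx I M N v := Or.inl ⟨hN, by simp [hM]⟩
      simp [voteN, hN, hM, h1, h2]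
  · rcases hM : M.m v with _ | z
    · have h1 : prefersVx I N M v := Or.inl ⟨hM, by simp [hN]⟩
      have h2 : ¬ prefersVx I M N v := by
        rintro (⟨h, _⟩ | ⟨a, b, h, _, _⟩) <;> simp [hN, hM] at h
      simp [voteN, hN, vote, hM, h1, h2]
    · by_cases hzu : z = u
      · subst hzu
        have h1 : ¬ prefersVx I N M v := by
          rintro (⟨h, _⟩ | ⟨a, b, ha, hb, hp⟩)
          · simp [hM] at h
          · rw [hN] at ha; rw [hM] at hb
            cases ha; cases hb
            exact I.pref_irrefl v _ hp
        have h2 : ¬ prefersVx I M N v := by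
          rintro (⟨h, _⟩ | ⟨a, b, ha, hb, hp⟩)
          · simp [hN] at h
          · rw [hM] at ha; rw [hN] at hb
            cases ha; cases hb
            exact I.pref_irrefl v _ hp
        simp [voteN, hN, vote, hM, h1, h2]
      · have hEu : I.E v u := N.valid v u hN
        have hEz : I.E v z := M.valid v z hM
        by_cases hp : I.pref v u z
        · have h1 : prefersVx I N M v := Or.inr ⟨u, z, hN, hM, hp⟩
          have h2 : ¬ prefersVx I M N v := by
            rintro (⟨h, _⟩ | ⟨a, b, ha, hb, hq⟩)
            · simp [hN] at h
            · rw [hM] at ha; rw [hN] at hb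
              cases ha; cases hb
              exact I.pref_asymm v u z hp hq
          have hv : vote I M v u = I.w v := by
            rw [vote, if_neg, if_pos]
            · exact Or.inr ⟨z, hM, hp⟩
            · rw [hM]; intro h; exact hzu (Option.some.inj h)
          simp [voteN, hN, hv, h1, h2]
        · have hq : I.pref v z u :=
            (I.pref_total v z u hEz hEu hzu).resolve_right hp
          have h1 : ¬ prefersVx I N M v := by
            rintro (⟨h, _⟩ | ⟨a, b, ha, hb, hr⟩)
            · simp [hM] at h
            · rw [hN] at ha; rw [hM] at hb
              cases ha; cases hb
              exact hp hr
          have h2 : prefersVx I M N v := Or.inr ⟨z, u, hM, hN, hq⟩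
          have hv : vote I M v u = - I.w v := by
            rw [vote, if_neg, if_neg]
            · rintro (h | ⟨z', hz', hr⟩)
              · simp [hM] at h
              · rw [hM] at hz'; cases hz'; exact hp hr
            · rw [hM]; intro h; exact hzu (Option.some.inj h)
          simp [voteN, hN, hv, h1, h2]

lemma voteN_sum (I : PMInstance V) (M N : Matching V I.E) :
    ∑ v : V, voteN I M N v = weightPref I N M - weightPref I M N := by
  rw [weightPref, weightPref, ← Finset.sum_sub_distrib]
  exact Finset.sum_congr rfl fun v _ => voteN_eq I M N v

lemma tight_of_sum_zero (I : PMInstance V) (M N : Matching V I.E) (y : V → ℚ)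
    (hy : IsWitness I M y) (hsum : ∑ v : V, voteN I M N v = 0) :
    ∀ u v : V, N.m u = some v → y u + y v = vote I M u v + vote I M v u := by
  obtain ⟨hy0, hyE, hyU, hyW⟩ := hy
  set t : V → ℚ := fun v => y v - voteN I M N v with ht
  have htv : ∀ x : V, t x = y x - voteN I M N x := fun _ => rfl
  have hinv : Function.Involutive (fun v : V => (N.m v).getD v) := by
    intro v
    rcases h : N.m v with _ | u
    · simp [h]
    · simp [h, (N.msymm v u).mp h]
  have hperm : ∑ v : V, t ((N.m v).getD v) = ∑ v : V, t v := by
    have := Equiv.sum_comp hinv.toPerm t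
    simpa [Function.Involutive.coe_toPerm] using this
  have htsum : ∑ v : V, t v = 0 := by
    simp only [ht, Finset.sum_sub_distrib, hy0, hsum, sub_zero]
  have hssum : ∑ v : V, (t v + t ((N.m v).getD v)) = 0 := by
    rw [Finset.sum_add_distrib, hperm, htsum]; ring
  have hnon : ∀ v ∈ (Finset.univ : Finset V), 0 ≤ t v + t ((N.m v).getD v) := by
    intro v _
    rcases h : N.m v with _ | u
    · rw [Option.getD_none, htv]
      rcases hM : M.m v with _ | z
      · have hv : voteN I M N v = 0 := by simp [voteN, h, hM]
        rw [hv]; linarith [hyU v hM]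
      · have hv : voteN I M N v = - I.w v := by simp [voteN, h, hM]
        rw [hv]; linarith [hyW v]
    · rw [Option.getD_some, htv v, htv u]
      have hvu : N.m u = some v := (N.msymm v u).mp h
      have h1 : voteN I M N v = vote I M v u := by simp [voteN, h]
      have h2 : voteN I M N u = vote I M u v := by simp [voteN, hvu]
      rw [h1, h2]
      linarith [hyE v u (N.valid v u h)]
  have hall : ∀ v ∈ (Finset.univ : Finset V), t v + t ((N.m v).getD v) = 0 :=
    (Finset.sum_eq_zero_iff_of_nonneg hnon).mp hssum
  intro u v huv
  have hvu : N.m v = some u := (N.msymm u v).mp huv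
  have h1 : voteN I M N u = vote I M u v := by simp [voteN, huv]
  have h2 : voteN I M N v = vote I M v u := by simp [voteN, hvu]
  have := hall u (Finset.mem_univ u)
  rw [huv, Option.getD_some, htv u, htv v, h1, h2] at this
  linarith

/-- Witnesses of two popular matchings are tight on every edge of (every
connected component of) their symmetric difference. -/
theorem witnesses_tight_on_symmDiff (I : PMInstance V)
    (M₁ M₂ : Matching V I.E) (h₁ : popular I M₁) (h₂ : popular I M₂)
    (y₁ y₂ : V → ℚ) (hy₁ : IsWitness I M₁ y₁) (hy₂ : IsWitness I M₂ y₂) :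
    ∀ u v : V, symmDiffRel M₁ M₂ u v →
      y₁ u + y₁ v = vote I M₁ u v + vote I M₁ v u ∧
      y₂ u + y₂ v = vote I M₂ u v + vote I M₂ v u := by
  have hw : weightPref I M₂ M₁ = weightPref I M₁ M₂ := le_antisymm (h₁ M₂) (h₂ M₁)
  have s11 : ∑ v : V, voteN I M₁ M₁ v = 0 := by rw [voteN_sum]; ring
  have s22 : ∑ v : V, voteN I M₂ M₂ v = 0 := by rw [voteN_sum]; ring
  have s12 : ∑ v : V, voteN I M₁ M₂ v = 0 := by rw [voteN_sum, hw]; ring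
  have s21 : ∑ v : V, voteN I M₂ M₁ v = 0 := by rw [voteN_sum, hw]; ring
  rintro u v (⟨h, -⟩ | ⟨h, -⟩)
  · exact ⟨tight_of_sum_zero I M₁ M₁ y₁ hy₁ s11 u v h,
      tight_of_sum_zero I M₂ M₁ y₂ hy₂ s21 u v h⟩
  · exact ⟨tight_of_sum_zero I M₁ M₂ y₁ hy₁ s12 u v h,
      tight_of_sum_zero I M₂ M₂ y₂ hy₂ s22 u v h⟩
end

section
/- Let C be a cycle component of the pruned popular-edge graph in an instance with w(a) = c > 3 for all a ∈ A and w(b) = 1 for all b ∈ B, and let M1, M2 be popular matchings on C with odd nice witnesses y1, y2. If y1 dominates y2 at some vertex b* ∈ B ∩ V(C) (meaning y1_{b*} ≥ y2_{b*} + 2, or y1_{b*} ≥ y2_{b*} and b* prefers M1 to M2), then y1 dominates y2 at every vertex b ∈ B ∩ V(C). -/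
attribute [local instance] Classical.propDecidable

variable {V : Type} [Fintype V] [DecidableEq V]

/-- A nice witness: a witness with values from the six-element candidate sets. -/
def NiceWitness (I : PMInstance V) (M : Matching V I.E) (c : ℚ) (y : V → ℚ) : Prop :=
  IsWitness I M y ∧
    (∀ a ∈ I.A, y a ∈ ({-c, 1 - c, 2 - c, -1, 0, 1} : Set ℚ)) ∧
    (∀ b : V, b ∉ I.A → y b ∈ ({-1, 0, 1, c - 2, c - 1, c} : Set ℚ))

/-- Cyclic successor on `Fin k`. -/
def finSucc {k : ℕ} (hk : 0 < k) (i : Fin k) : Fin k :=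
  ⟨((i : ℕ) + 1) % k, Nat.mod_lt _ hk⟩

lemma vote_eq_of_matched (I : PMInstance V) (M : Matching V I.E) (u z v : V)
    (huz : M.m u = some z) (hvz : v ≠ z) :
    vote I M u v = if I.pref u v z then I.w u else - I.w u := by
  have h1 : M.m u ≠ some v := by
    rw [huz]; intro h; exact hvz (Option.some.inj h).symm
  have h2 : (M.m u = none ∨ ∃ z' : V, M.m u = some z' ∧ I.pref u v z') ↔ I.pref u v z := by
    constructor
    · rintro (h | ⟨z', hz', hp⟩)
      · rw [huz] at h; exact absurd h (by simp)
      · rw [huz] at hz'; rw [Option.some.inj hz']; exact hp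
    · intro h; exact Or.inr ⟨z, huz, h⟩
  rw [vote, if_neg h1, if_congr h2 rfl rfl]

lemma vote_eq_zero_of_matched (I : PMInstance V) (M : Matching V I.E) (u v : V)
    (huv : M.m u = some v) : vote I M u v = 0 := by
  rw [vote, if_pos huv]

/-- On a cycle component `a₁ b₁ a₂ b₂ … a_k b_k a₁` with popular matchings
`M₁ = {{aᵢ, bᵢ}}` and `M₂ = {{a_{i+1}, bᵢ}}` and odd nice witnesses `y₁, y₂`:
if `y₁` dominates `y₂` at some `b`-vertex, it dominates `y₂` at every
`b`-vertex. -/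
theorem cycle_domination_propagates (I : PMInstance V) (c : ℚ) (hc : 3 < c)
    (hA : ∀ a ∈ I.A, I.w a = c) (hB : ∀ b : V, b ∉ I.A → I.w b = 1)
    (k : ℕ) (hk : 0 < k) (a b : Fin k → V)
    (ha : ∀ i, a i ∈ I.A) (hb : ∀ i, b i ∉ I.A)
    (hinj : Function.Injective (fun x : Fin k ⊕ Fin k => Sum.elim a b x))
    (hcover : ∀ v : V, (∃ i, v = a i) ∨ (∃ i, v = b i))
    (hE : ∀ u v : V, I.E u v ↔
      ((∃ i : Fin k, (u = a i ∧ v = b i) ∨ (u = b i ∧ v = a i)) ∨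
        (∃ i : Fin k, (u = b i ∧ v = a (finSucc hk i)) ∨
          (u = a (finSucc hk i) ∧ v = b i))))
    (M₁ M₂ : Matching V I.E)
    (hM₁ : ∀ i, M₁.m (a i) = some (b i))
    (hM₂ : ∀ i, M₂.m (b i) = some (a (finSucc hk i)))
    (hpop₁ : popular I M₁) (hpop₂ : popular I M₂)
    (y₁ y₂ : V → ℚ)
    (hy₁ : NiceWitness I M₁ c y₁) (hy₂ : NiceWitness I M₂ c y₂)
    (hodd₁ : ∀ v : V, y₁ v ∈ ({-c, 2 - c, -1, 1, c - 2, c} : Set ℚ))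
    (hodd₂ : ∀ v : V, y₂ v ∈ ({-c, 2 - c, -1, 1, c - 2, c} : Set ℚ))
    (i₀ : Fin k)
    (hdom : y₂ (b i₀) + 2 ≤ y₁ (b i₀) ∨
      (y₂ (b i₀) ≤ y₁ (b i₀) ∧ prefersVx I M₁ M₂ (b i₀))) :
    ∀ i : Fin k, y₂ (b i) + 2 ≤ y₁ (b i) ∨
      (y₂ (b i) ≤ y₁ (b i) ∧ prefersVx I M₁ M₂ (b i)) := by
  classical
  by_cases hk1 : k = 1
  · intro i
    have : i = i₀ := by
      subst hk1
      exact Fin.ext (by omega)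
    rw [this]; exact hdom
  have hk2 : 2 ≤ k := by omega
  obtain ⟨⟨hsum₁, hedge₁, -, -⟩, -, -⟩ := hy₁
  obtain ⟨⟨hsum₂, hedge₂, -, -⟩, -, -⟩ := hy₂
  have hM₁b : ∀ i, M₁.m (b i) = some (a i) := fun i => (M₁.msymm _ _).mp (hM₁ i)
  have hM₂a : ∀ i, M₂.m (a (finSucc hk i)) = some (b i) := fun i => (M₂.msymm _ _).mp (hM₂ i)
  have a_inj : ∀ i j : Fin k, a i = a j → i = j := by
    intro i j h
    exact Sum.inl.inj (hinj (show (fun x : Fin k ⊕ Fin k => Sum.elim a b x) (Sum.inl i) =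
      (fun x : Fin k ⊕ Fin k => Sum.elim a b x) (Sum.inl j) from h))
  have b_inj : ∀ i j : Fin k, b i = b j → i = j := by
    intro i j h
    exact Sum.inr.inj (hinj (show (fun x : Fin k ⊕ Fin k => Sum.elim a b x) (Sum.inr i) =
      (fun x : Fin k ⊕ Fin k => Sum.elim a b x) (Sum.inr j) from h))
  have hne_succ : ∀ i : Fin k, finSucc hk i ≠ i := by
    intro i h
    have h' : ((i : ℕ) + 1) % k = (i : ℕ) := congrArg Fin.val h
    have hi := i.isLt
    rcases Nat.lt_or_ge ((i : ℕ) + 1) k with h1 | h1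
    · rw [Nat.mod_eq_of_lt h1] at h'; omega
    · have h2 : (i : ℕ) + 1 = k := by omega
      rw [h2, Nat.mod_self] at h'; omega
  -- reindexing sums
  have hbij : Function.Bijective (fun x : Fin k ⊕ Fin k => Sum.elim a b x) := by
    refine ⟨hinj, fun v => ?_⟩
    rcases hcover v with ⟨i, rfl⟩ | ⟨i, rfl⟩
    exacts [⟨Sum.inl i, rfl⟩, ⟨Sum.inr i, rfl⟩]
  have sum_eq : ∀ f : V → ℚ, ∑ v : V, f v = ∑ i : Fin k, f (a i) + ∑ i : Fin k, f (b i) := by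
    intro f
    rw [← Fintype.sum_bijective _ hbij (fun x => f (Sum.elim a b x)) f (fun _ => rfl),
      Fintype.sum_sum_type]
    rfl
  have hsbij : Function.Bijective (finSucc hk) := by
    refine Finite.injective_iff_bijective.mp ?_
    intro i j h
    have h' : ((i : ℕ) + 1) % k = ((j : ℕ) + 1) % k := congrArg Fin.val h
    have hi := i.isLt; have hj := j.isLt
    apply Fin.ext
    rcases Nat.lt_or_ge ((i : ℕ) + 1) k with h1 | h1 <;>
      rcases Nat.lt_or_ge ((j : ℕ) + 1) k with h2 | h2
    · rw [Nat.mod_eq_of_lt h1, Nat.mod_eq_of_lt h2] at h'; omega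
    · have : (j : ℕ) + 1 = k := by omega
      rw [Nat.mod_eq_of_lt h1, this, Nat.mod_self] at h'; omega
    · have : (i : ℕ) + 1 = k := by omega
      rw [this, Nat.mod_self, Nat.mod_eq_of_lt h2] at h'; omega
    · omega
  -- tightness on M₁ edges
  have tight₁ : ∀ i : Fin k, y₁ (a i) + y₁ (b i) = 0 := by
    have h0 : ∀ i : Fin k, 0 ≤ y₁ (a i) + y₁ (b i) := by
      intro i
      have hE1 : I.E (a i) (b i) := (hE _ _).mpr (Or.inl ⟨i, Or.inl ⟨rfl, rfl⟩⟩)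
      have hc1 := hedge₁ _ _ hE1
      rw [vote_eq_zero_of_matched I M₁ _ _ (hM₁ i),
        vote_eq_zero_of_matched I M₁ _ _ (hM₁b i)] at hc1
      linarith
    have hsum' : ∑ i : Fin k, (y₁ (a i) + y₁ (b i)) = 0 := by
      rw [Finset.sum_add_distrib]
      have := sum_eq y₁
      linarith
    intro i
    exact (Finset.sum_eq_zero_iff_of_nonneg (fun i _ => h0 i)).mp hsum' i (Finset.mem_univ i)
  -- tightness on M₂ edges
  have tight₂ : ∀ i : Fin k, y₂ (b i) + y₂ (a (finSucc hk i)) = 0 := by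
    have h0 : ∀ i : Fin k, 0 ≤ y₂ (b i) + y₂ (a (finSucc hk i)) := by
      intro i
      have hE1 : I.E (b i) (a (finSucc hk i)) := (hE _ _).mpr (Or.inr ⟨i, Or.inl ⟨rfl, rfl⟩⟩)
      have hc1 := hedge₂ _ _ hE1
      rw [vote_eq_zero_of_matched I M₂ _ _ (hM₂ i),
        vote_eq_zero_of_matched I M₂ _ _ (hM₂a i)] at hc1
      linarith
    have hre : ∑ i : Fin k, y₂ (a (finSucc hk i)) = ∑ i : Fin k, y₂ (a i) :=
      Fintype.sum_bijective (finSucc hk) hsbij _ _ (fun _ => rfl)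
    have hsum' : ∑ i : Fin k, (y₂ (b i) + y₂ (a (finSucc hk i))) = 0 := by
      rw [Finset.sum_add_distrib, hre]
      have := sum_eq y₂
      linarith
    intro i
    exact (Finset.sum_eq_zero_iff_of_nonneg (fun i _ => h0 i)).mp hsum' i (Finset.mem_univ i)
  -- the propagation step (backwards around the cycle)
  have step : ∀ i : Fin k,
      (y₂ (b (finSucc hk i)) + 2 ≤ y₁ (b (finSucc hk i)) ∨
        (y₂ (b (finSucc hk i)) ≤ y₁ (b (finSucc hk i)) ∧ prefersVx I M₁ M₂ (b (finSucc hk i)))) →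
      (y₂ (b i) + 2 ≤ y₁ (b i) ∨
        (y₂ (b i) ≤ y₁ (b i) ∧ prefersVx I M₁ M₂ (b i))) := by
    intro i hDj
    set j := finSucc hk i with hj
    have hji : j ≠ i := hne_succ i
    have hjj : finSucc hk j ≠ j := hne_succ j
    have hab1 : a j ≠ a i := fun h => hji (a_inj _ _ h)
    have hbb : b i ≠ b j := fun h => hji (b_inj _ _ h).symm
    have haj : a j ≠ a (finSucc hk j) := fun h => hjj (a_inj _ _ h).symm
    have hEbiaj : I.E (b i) (a j) := (hE _ _).mpr (Or.inr ⟨i, Or.inl ⟨rfl, rfl⟩⟩)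
    have hEajbi : I.E (a j) (b i) := I.Esymm _ _ hEbiaj
    have hEajbj : I.E (a j) (b j) := (hE _ _).mpr (Or.inl ⟨j, Or.inl ⟨rfl, rfl⟩⟩)
    have hEbiai : I.E (b i) (a i) := I.Esymm _ _ ((hE _ _).mpr (Or.inl ⟨i, Or.inl ⟨rfl, rfl⟩⟩))
    have hc1 := hedge₁ _ _ hEbiaj
    have hc2 := hedge₂ _ _ hEajbj
    have v1 : vote I M₁ (b i) (a j) = if I.pref (b i) (a j) (a i) then 1 else -1 := by
      rw [vote_eq_of_matched I M₁ (b i) (a i) (a j) (hM₁b i) hab1, hB _ (hb i)]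
    have v2 : vote I M₁ (a j) (b i) = if I.pref (a j) (b i) (b j) then c else -c := by
      rw [vote_eq_of_matched I M₁ (a j) (b j) (b i) (hM₁ j) hbb, hA _ (ha j)]
    have v3 : vote I M₂ (a j) (b j) = if I.pref (a j) (b j) (b i) then c else -c := by
      rw [vote_eq_of_matched I M₂ (a j) (b i) (b j) (hM₂a i) (Ne.symm hbb), hA _ (ha j)]
    have v4 : vote I M₂ (b j) (a j) =
        if I.pref (b j) (a j) (a (finSucc hk j)) then 1 else -1 := by
      rw [vote_eq_of_matched I M₂ (b j) (a (finSucc hk j)) (a j) (hM₂ j) haj, hB _ (hb j)]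
    have cancel : (if I.pref (a j) (b i) (b j) then (c : ℚ) else -c) +
        (if I.pref (a j) (b j) (b i) then (c : ℚ) else -c) = 0 := by
      rcases I.pref_total (a j) (b i) (b j) hEajbi hEajbj hbb with h | h
      · rw [if_pos h, if_neg (I.pref_asymm _ _ _ h)]; ring
      · rw [if_neg (I.pref_asymm _ _ _ h), if_pos h]; ring
    have t1 : y₁ (a j) = - y₁ (b j) := by have := tight₁ j; linarith
    have t2 : y₂ (a j) = - y₂ (b i) := by have := tight₂ i; rw [← hj] at this; linarith
    rw [v1, v2] at hc1
    rw [v3, v4] at hc2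
    -- combined inequality
    have key : (if I.pref (b i) (a j) (a i) then (1 : ℚ) else -1) +
        (if I.pref (b j) (a j) (a (finSucc hk j)) then (1 : ℚ) else -1) ≤
        (y₁ (b i) - y₂ (b i)) - (y₁ (b j) - y₂ (b j)) := by
      rw [t1] at hc1; rw [t2] at hc2
      linarith [cancel]
    have hM₂bi : M₂.m (b i) = some (a j) := hM₂ i
    have mkpref : I.pref (b i) (a i) (a j) → prefersVx I M₁ M₂ (b i) := by
      intro h
      exact Or.inr ⟨a i, a j, hM₁b i, hM₂bi, h⟩
    have tot_i := I.pref_total (b i) (a i) (a j) hEbiai hEbiaj (Ne.symm hab1)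
    rcases hDj with hg | ⟨hg, hpref⟩
    · -- y₂ (b j) + 2 ≤ y₁ (b j)
      have hq : (-1 : ℚ) ≤ if I.pref (b j) (a j) (a (finSucc hk j)) then (1 : ℚ) else -1 := by
        split <;> norm_num
      rcases tot_i with hQi | hQi'
      · have hv1 : (if I.pref (b i) (a j) (a i) then (1 : ℚ) else -1) = -1 :=
          if_neg (I.pref_asymm _ _ _ hQi)
        rw [hv1] at key
        exact Or.inr ⟨by linarith, mkpref hQi⟩
      · have hv1 : (if I.pref (b i) (a j) (a i) then (1 : ℚ) else -1) = 1 := if_pos hQi'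
        rw [hv1] at key
        exact Or.inl (by linarith)
    · -- y₂ (b j) ≤ y₁ (b j) and b j prefers M₁
      have hQj : I.pref (b j) (a j) (a (finSucc hk j)) := by
        rcases hpref with ⟨hnone, -⟩ | ⟨u, u', h1, h2, h3⟩
        · rw [hM₂ j] at hnone; exact absurd hnone (by simp)
        · rw [hM₁b j] at h1; rw [hM₂ j] at h2
          rw [← Option.some.inj h1, ← Option.some.inj h2] at h3
          exact h3
      have hv4 : (if I.pref (b j) (a j) (a (finSucc hk j)) then (1 : ℚ) else -1) = 1 :=
        if_pos hQj
      rw [hv4] at key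
      rcases tot_i with hQi | hQi'
      · have hv1 : (if I.pref (b i) (a j) (a i) then (1 : ℚ) else -1) = -1 :=
          if_neg (I.pref_asymm _ _ _ hQi)
        rw [hv1] at key
        exact Or.inr ⟨by linarith, mkpref hQi⟩
      · have hv1 : (if I.pref (b i) (a j) (a i) then (1 : ℚ) else -1) = 1 := if_pos hQi'
        rw [hv1] at key
        exact Or.inl (by linarith)
  -- iterate the step around the cycle
  have iter : ∀ m : ℕ, ∀ j : Fin k, (finSucc hk)^[m] j = i₀ →
      (y₂ (b j) + 2 ≤ y₁ (b j) ∨ (y₂ (b j) ≤ y₁ (b j) ∧ prefersVx I M₁ M₂ (b j))) := by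
    intro m
    induction m with
    | zero => intro j h; rw [Function.iterate_zero_apply] at h; rw [h]; exact hdom
    | succ n ih =>
        intro j h
        apply step
        apply ih
        rw [← Function.iterate_succ_apply]
        exact h
  have iterate_val : ∀ (m : ℕ) (j : Fin k),
      (((finSucc hk)^[m] j) : ℕ) = ((j : ℕ) + m) % k := by
    intro m
    induction m with
    | zero => intro j; simp [Nat.mod_eq_of_lt j.isLt]
    | succ n ih =>
        intro j
        rw [Function.iterate_succ_apply']
        show ((((finSucc hk)^[n] j) : ℕ) + 1) % k = ((j : ℕ) + (n + 1)) % k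
        rw [ih j, Nat.mod_add_mod, ← Nat.add_assoc]
  intro i
  apply iter ((i₀ : ℕ) + k - (i : ℕ)) i
  apply Fin.ext
  rw [iterate_val]
  have hi := i.isLt
  have : (i : ℕ) + ((i₀ : ℕ) + k - (i : ℕ)) = (i₀ : ℕ) + k := by omega
  rw [this, Nat.add_mod_right, Nat.mod_eq_of_lt i₀.isLt]
end
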